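/- arXiv:2104.10790 — 11 statements merged into one kernel-verified Lean document; each statement's English description precedes it below -/
import Mathlib

section
/- Let x be a vector in R^n with nonnegative entries satisfying 1^T x ≤ ‖x‖². Then 1^T (I − x x^T/‖x‖²) 1 ≥ ‖(1 − x)₊‖², where 1 is the all-ones vector, (·)₊ denotes the entrywise positive part, and ‖·‖ is the Euclidean norm. -/
open Finset

theorem stmt_0 (n : ℕ) (x : Fin n → ℝ) (hx : ∀ i, 0 ≤ x i)
    (h : ∑ i, x i ≤ ∑ i, (x i) ^ 2) :
    ∑ i, (max 0 (1 - x i)) ^ 2 ≤ (n : ℝ) - (∑ i, x i) ^ 2 / (∑ i, (x i) ^ 2) := by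
  by_cases hq : ∑ i, (x i) ^ 2 = 0
  · have hx0 : ∀ i, x i = 0 := by
      intro i
      have h0 := (Finset.sum_eq_zero_iff_of_nonneg
        (fun i _ => sq_nonneg (x i))).mp hq i (Finset.mem_univ i)
      nlinarith [h0]
    simp [hx0, hq]
  · have hqpos : 0 < ∑ i, (x i) ^ 2 :=
      lt_of_le_of_ne (Finset.sum_nonneg fun i _ => sq_nonneg _) (Ne.symm hq)
    set s := ∑ i, x i with hs
    set q := ∑ i, (x i) ^ 2 with hqdef
    have hs0 : 0 ≤ s := Finset.sum_nonneg fun i _ => hx i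
    have ht1 : s / q ≤ 1 := (div_le_one hqpos).mpr h
    have ht0 : 0 ≤ s / q := div_nonneg hs0 hqpos.le
    have key : ∀ i, (max 0 (1 - x i)) ^ 2 ≤ (1 - (s / q) * x i) ^ 2 := by
      intro i
      rcases le_or_gt 1 (x i) with hxi | hxi
      · have : max 0 (1 - x i) = 0 := max_eq_left (by linarith)
        rw [this]
        simpa using sq_nonneg (1 - s / q * x i)
      · have h1 : (0:ℝ) ≤ 1 - x i := by linarith
        have h2 : 1 - x i ≤ 1 - (s / q) * x i := by nlinarith [hx i]
        rw [max_eq_right h1]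
        nlinarith
    have expand : ∑ i, (1 - (s / q) * x i) ^ 2
        = (n : ℝ) - 2 * (s / q) * s + (s / q) ^ 2 * q := by
      have : ∀ i ∈ Finset.univ, (1 - (s / q) * x i) ^ 2
          = 1 - 2 * (s / q) * x i + (s / q) ^ 2 * (x i) ^ 2 := by
        intro i _; ring
      rw [Finset.sum_congr rfl this, Finset.sum_add_distrib, Finset.sum_sub_distrib,
        ← Finset.mul_sum, ← Finset.mul_sum, Finset.sum_const, Finset.card_univ,
        Fintype.card_fin, nsmul_eq_mul, mul_one, ← hs, ← hqdef]
    have hval : (n : ℝ) - 2 * (s / q) * s + (s / q) ^ 2 * q = (n : ℝ) - s ^ 2 / q := by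
      field_simp
      ring
    calc ∑ i, (max 0 (1 - x i)) ^ 2
        ≤ ∑ i, (1 - (s / q) * x i) ^ 2 := Finset.sum_le_sum fun i _ => key i
      _ = (n : ℝ) - s ^ 2 / q := by rw [expand, hval]
end

section
/- Let A be an n×n positive semidefinite symmetric matrix with eigenvalues s₁ ≥ ⋯ ≥ s_n ≥ 0, and B an r×r positive semidefinite symmetric matrix with eigenvalues 0 ≤ d₁ ≤ ⋯ ≤ d_r, where r ≤ n. Then the minimum over Y ∈ R^{n×r} of ‖A − YY^T‖_F² + 2⟨B, Y^T Y⟩ equals Σ_{i=1}^n s_i² − Σ_{i=1}^r [(s_i − d_i)₊]². -/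
/-!
Let `C = YᵀY` have eigenvalues `μ₁ ≥ ⋯ ≥ μ_r ≥ 0` with orthonormal eigenvectors `w_k`. Expanding
the square, the objective is `∑ sᵢ² - 2 tr(YᵀAY) + ∑ μ_k² + 2 tr(BC)`. In the eigenbases,
`tr(YᵀAY) = ∑ᵢₖ sᵢ μ_k Pᵢₖ` where `Pᵢₖ = ⟨uᵢ, Yw_k⟩² / μ_k` is doubly substochastic (Bessel for the
orthogonal family `Yw_k`, Parseval for `u`), and `tr(BC) = ∑ⱼₖ dⱼ μ_k ⟨vⱼ, w_k⟩²` with a doubly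
stochastic kernel. A rearrangement inequality for such matrices, proved by two summations by parts,
gives `tr(YᵀAY) ≤ ∑ sᵢ μᵢ` and `tr(BC) ≥ ∑ dᵢ μᵢ`; hence the objective is at least
`∑ sᵢ² - ∑ᵢ (2 (sᵢ - dᵢ) μᵢ - μᵢ²) ≥ ∑ sᵢ² - ∑ᵢ (sᵢ - dᵢ)₊²`. Equality holds at
`Y = ∑ᵢ √((sᵢ - dᵢ)₊) uᵢ vᵢᵀ`, for which `C` has the eigenpairs `((sᵢ - dᵢ)₊, vᵢ)`.
-/

open Matrix Finset

theorem sum_range_mul_le_of_forall_sum_range_le {a q μ : ℕ → ℝ} {m : ℕ} (ha : Antitone a)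
    (ha0 : ∀ i, 0 ≤ a i) (h : ∀ K ≤ m, ∑ i ∈ range K, q i ≤ ∑ i ∈ range K, μ i) :
    ∑ i ∈ range m, a i * q i ≤ ∑ i ∈ range m, a i * μ i := by
  have hG : ∀ K ≤ m, 0 ≤ ∑ i ∈ range K, (μ i - q i) := fun K hK => by
    rw [sum_sub_distrib]; linarith [h K hK]
  suffices 0 ≤ ∑ i ∈ range m, a i • (μ i - q i) by
    simpa only [smul_eq_mul, mul_sub, sum_sub_distrib, sub_nonneg] using this
  rw [sum_range_by_parts, sub_nonneg]
  have hsteps : ∑ i ∈ range (m - 1), (a (i + 1) - a i) • ∑ l ∈ range (i + 1), (μ l - q l) ≤ 0 :=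
    sum_nonpos fun i hi => mul_nonpos_of_nonpos_of_nonneg
      (sub_nonpos.2 (ha i.le_succ)) (hG _ (by grind))
  exact hsteps.trans (smul_nonneg (ha0 (m - 1)) (hG m le_rfl))

theorem sum_range_ite_lt (f : ℕ → ℝ) (n K : ℕ) :
    ∑ i ∈ range n, (if i < K then f i else 0) = ∑ i ∈ range (min n K), f i := by
  rw [← sum_filter]
  congr 1
  ext i
  simp only [mem_filter, mem_range]
  omega

theorem sum_range_mul_le_sum_range_min {b ρ : ℕ → ℝ} {k K : ℕ} (hb : Antitone b)
    (hb0 : ∀ j, 0 ≤ b j) (hρ0 : ∀ j, 0 ≤ ρ j) (hρ1 : ∀ j < k, ρ j ≤ 1)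
    (hρK : ∑ j ∈ range k, ρ j ≤ K) :
    ∑ j ∈ range k, b j * ρ j ≤ ∑ j ∈ range (min k K), b j := by
  have h := sum_range_mul_le_of_forall_sum_range_le (q := ρ) (μ := fun j => if j < K then 1 else 0)
    (m := k) hb hb0 fun L hL => ?_
  · simpa [mul_ite, sum_range_ite_lt] using h
  rw [sum_range_ite_lt, sum_const, card_range, nsmul_one, Nat.cast_min]
  refine le_min ?_ ?_
  · calc ∑ j ∈ range L, ρ j ≤ ∑ j ∈ range L, 1 :=
          sum_le_sum fun j hj => hρ1 j (by grind)
      _ = L := by simp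
  · exact (sum_le_sum_of_subset_of_nonneg (range_subset_range.2 hL) fun j _ _ => hρ0 j).trans hρK

theorem sum_range_sum_range_mul_le_of_substochastic {m k : ℕ} {a b : ℕ → ℝ} {P : ℕ → ℕ → ℝ}
    (ha : Antitone a) (ha0 : ∀ i, 0 ≤ a i) (hb : Antitone b) (hb0 : ∀ j, 0 ≤ b j)
    (hP : ∀ i j, 0 ≤ P i j) (hrow : ∀ i < m, ∑ j ∈ range k, P i j ≤ 1)
    (hcol : ∀ j < k, ∑ i ∈ range m, P i j ≤ 1) :
    ∑ i ∈ range m, ∑ j ∈ range k, a i * b j * P i j ≤ ∑ l ∈ range (min m k), a l * b l := by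
  have h := sum_range_mul_le_of_forall_sum_range_le (q := fun i => ∑ j ∈ range k, b j * P i j)
    (μ := fun i => if i < k then b i else 0) (m := m) ha ha0 fun K hK => ?_
  · simpa [mul_ite, sum_range_ite_lt, mul_sum, mul_assoc] using h
  rw [sum_comm, sum_range_ite_lt, min_comm]
  simp_rw [← mul_sum]
  refine sum_range_mul_le_sum_range_min hb hb0 (fun j => sum_nonneg fun i _ => hP i j)
    (fun j hj => ?_) ?_
  · exact (sum_le_sum_of_subset_of_nonneg (range_subset_range.2 hK)
      fun i _ _ => hP i j).trans (hcol j hj)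
  · rw [sum_comm]
    calc ∑ i ∈ range K, ∑ j ∈ range k, P i j ≤ ∑ i ∈ range K, 1 :=
          sum_le_sum fun i hi => hrow i (by grind)
      _ = K := by simp

theorem antitone_dite_lt {m : ℕ} {a : Fin m → ℝ} (ha : Antitone a) (ha0 : ∀ i, 0 ≤ a i) :
    Antitone fun i : ℕ => if h : i < m then a ⟨i, h⟩ else 0 := by
  intro i j hij
  by_cases hj : j < m
  · simpa [hj, show i < m by omega] using ha (Fin.mk_le_mk.2 hij)
  · simp only [hj, dite_false]
    split_ifs
    exacts [ha0 _, le_rfl]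

theorem sum_sum_mul_le_of_substochastic {m k : ℕ} (hkm : k ≤ m) {a : Fin m → ℝ}
    {b : Fin k → ℝ} (ha : Antitone a) (ha0 : ∀ i, 0 ≤ a i) (hb : Antitone b)
    (hb0 : ∀ j, 0 ≤ b j) {P : Fin m → Fin k → ℝ} (hP : ∀ i j, 0 ≤ P i j)
    (hrow : ∀ i, ∑ j, P i j ≤ 1) (hcol : ∀ j, ∑ i, P i j ≤ 1) :
    ∑ i, ∑ j, a i * b j * P i j ≤ ∑ j, a (Fin.castLE hkm j) * b j := by
  have h := sum_range_sum_range_mul_le_of_substochastic (m := m) (k := k)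
    (P := fun i j => if h : i < m ∧ j < k then P ⟨i, h.1⟩ ⟨j, h.2⟩ else 0)
    (antitone_dite_lt ha ha0) (fun i => by split_ifs <;> simp [ha0])
    (antitone_dite_lt hb hb0) (fun j => by split_ifs <;> simp [hb0])
    (fun i j => by split_ifs <;> simp [hP]) (fun i hi => ?_) (fun j hj => ?_)
  · have hk : ∀ j : Fin k, (j : ℕ) < m := fun j => j.isLt.trans_le hkm
    simpa [sum_range, min_eq_right hkm, hk, Fin.castLE] using h
  · simpa [sum_range, hi] using hrow ⟨i, hi⟩
  · simpa [sum_range, hj] using hcol ⟨j, hj⟩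

theorem sum_mul_le_sum_sum_mul_of_doublyStochastic {m : ℕ} {a b : Fin m → ℝ} (ha : Monotone a)
    (hb : Antitone b) (hb0 : ∀ j, 0 ≤ b j) {P : Fin m → Fin m → ℝ} (hP : ∀ i j, 0 ≤ P i j)
    (hrow : ∀ i, ∑ j, P i j ≤ 1) (hcol : ∀ j, ∑ i, P i j = 1) :
    ∑ i, a i * b i ≤ ∑ i, ∑ j, a i * b j * P i j := by
  -- shifting by an upper bound `D` makes `D - a` antitone and nonnegative; since the columns
  -- of `P` sum to one, the shift contributes the same `D * ∑ b` to both sides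
  obtain ⟨D, hD⟩ := Finite.bddAbove_range a
  have h := sum_sum_mul_le_of_substochastic le_rfl (a := fun i => D - a i)
    (fun i j hij => sub_le_sub_left (ha hij) D) (fun i => sub_nonneg.2 (hD ⟨i, rfl⟩))
    hb hb0 hP hrow fun j => (hcol j).le
  have hDb : ∑ i, ∑ j, D * b j * P i j = ∑ i, D * b i := by
    rw [sum_comm]
    simp_rw [← mul_sum, hcol, mul_one, mul_sum]
  simp only [Fin.castLE_rfl, id, sub_mul, sum_sub_distrib, hDb] at h
  linarith

section Orthonormal

variable {ι : Type*} [Fintype ι]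

theorem sum_sq_dotProduct_div_le {κ : Type*} [Fintype κ] {z : κ → ι → ℝ}
    (hz : Pairwise fun j k => z j ⬝ᵥ z k = 0) (x : ι → ℝ) :
    ∑ k, (x ⬝ᵥ z k) ^ 2 / (z k ⬝ᵥ z k) ≤ x ⬝ᵥ x := by
  set c : κ → ℝ := fun k => (x ⬝ᵥ z k) / (z k ⬝ᵥ z k)
  set y := ∑ k, c k • z k
  have hzy : ∀ j, z j ⬝ᵥ y = c j * (z j ⬝ᵥ z j) := fun j => by
    simp only [y, dotProduct_sum, dotProduct_smul, smul_eq_mul]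
    exact sum_eq_single j (fun k _ hkj => by simp [hz hkj.symm]) (by simp)
  have hxy : x ⬝ᵥ y = ∑ k, (x ⬝ᵥ z k) ^ 2 / (z k ⬝ᵥ z k) := by
    simp only [y, c, dotProduct_sum, dotProduct_smul, smul_eq_mul]
    exact sum_congr rfl fun k _ => by ring
  have hyy : y ⬝ᵥ y = ∑ k, (x ⬝ᵥ z k) ^ 2 / (z k ⬝ᵥ z k) := by
    simp only [y, sum_dotProduct, smul_dotProduct, hzy, smul_eq_mul]
    refine sum_congr rfl fun k _ => ?_
    rcases eq_or_ne (z k ⬝ᵥ z k) 0 with h | h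
    · simp [c, h]
    · simp only [c]
      field_simp
  have h : 0 ≤ (x - y) ⬝ᵥ (x - y) := sum_nonneg fun i _ => mul_self_nonneg _
  rw [sub_dotProduct, dotProduct_sub, dotProduct_sub, dotProduct_comm y x, hxy, hyy] at h
  linarith

theorem sum_smul_vecMulVec_mulVec {κ ι' : Type*} [Fintype κ] [DecidableEq κ]
    {y : κ → ι → ℝ} (hy : ∀ i j, y i ⬝ᵥ y j = if i = j then 1 else 0) (c : κ → ℝ)
    (x : κ → ι' → ℝ) (l : κ) : (∑ j, c j • vecMulVec (x j) (y j)) *ᵥ y l = c l • x l := by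
  simp [sum_mulVec, smul_mulVec, vecMulVec_mulVec, hy]

variable [DecidableEq ι] {w : ι → ι → ℝ}

theorem sum_vecMulVec_self_eq_one (hw : ∀ i j, w i ⬝ᵥ w j = if i = j then 1 else 0) :
    ∑ k, vecMulVec (w k) (w k) = 1 := by
  have h : of w * (of w)ᵀ = 1 := by
    ext i j
    simpa [mul_apply, one_apply, dotProduct] using hw i j
  ext a b
  simpa [mul_apply, Matrix.sum_apply, vecMulVec_apply] using congr($(mul_eq_one_comm.mp h) a b)

theorem sum_dotProduct_smul_eq (hw : ∀ i j, w i ⬝ᵥ w j = if i = j then 1 else 0)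
    (x : ι → ℝ) : ∑ k, (w k ⬝ᵥ x) • w k = x := by
  simpa [sum_mulVec, vecMulVec_mulVec] using congr_arg (· *ᵥ x) (sum_vecMulVec_self_eq_one hw)

theorem sum_sq_dotProduct_eq (hw : ∀ i j, w i ⬝ᵥ w j = if i = j then 1 else 0)
    (x : ι → ℝ) : ∑ k, (w k ⬝ᵥ x) ^ 2 = x ⬝ᵥ x := by
  calc ∑ k, (w k ⬝ᵥ x) ^ 2 = x ⬝ᵥ ∑ k, (w k ⬝ᵥ x) • w k := by
        simp [dotProduct_comm x, sum_dotProduct, smul_dotProduct, sq]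
    _ = x ⬝ᵥ x := by rw [sum_dotProduct_smul_eq hw]

theorem trace_eq_sum_dotProduct_mulVec (hw : ∀ i j, w i ⬝ᵥ w j = if i = j then 1 else 0)
    (M : Matrix ι ι ℝ) : trace M = ∑ k, w k ⬝ᵥ M *ᵥ w k := by
  conv_lhs => rw [← M.mul_one, ← sum_vecMulVec_self_eq_one hw]
  simp [mul_sum, trace_sum, mul_vecMulVec, dotProduct_comm]

theorem dotProduct_mulVec_eq_sum_of_mulVec_eq_smul
    (hw : ∀ i j, w i ⬝ᵥ w j = if i = j then 1 else 0) {M : Matrix ι ι ℝ} {μ : ι → ℝ}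
    (hM : ∀ k, M *ᵥ w k = μ k • w k) (x : ι → ℝ) :
    x ⬝ᵥ M *ᵥ x = ∑ k, μ k * (w k ⬝ᵥ x) ^ 2 := by
  have hMx : M *ᵥ x = ∑ k, (μ k * (w k ⬝ᵥ x)) • w k := by
    conv_lhs => rw [← sum_dotProduct_smul_eq hw x]
    simp [mulVec_sum, mulVec_smul, hM, smul_smul, mul_comm]
  simp [hMx, dotProduct_comm x, sum_dotProduct, smul_dotProduct, sq, mul_assoc]

theorem trace_mul_eq_sum_of_mulVec_eq_smul
    (hw : ∀ i j, w i ⬝ᵥ w j = if i = j then 1 else 0) {M : Matrix ι ι ℝ} {μ : ι → ℝ}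
    (hM : ∀ k, M *ᵥ w k = μ k • w k) (N : Matrix ι ι ℝ) :
    trace (N * M) = ∑ k, μ k * (w k ⬝ᵥ N *ᵥ w k) := by
  simp [trace_eq_sum_dotProduct_mulVec hw, ← mulVec_mulVec, hM, mulVec_smul, dotProduct_smul]

theorem trace_transpose_mul_mul_eq_sum {m : Type*} [Fintype m]
    (hw : ∀ i j, w i ⬝ᵥ w j = if i = j then 1 else 0) (A : Matrix m m ℝ) (Y : Matrix m ι ℝ) :
    trace (Yᵀ * A * Y) = ∑ k, (Y *ᵥ w k) ⬝ᵥ A *ᵥ (Y *ᵥ w k) := by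
  simp [trace_eq_sum_dotProduct_mulVec hw, ← mulVec_mulVec, dotProduct_mulVec _ Yᵀ,
    vecMul_transpose]

theorem mulVec_dotProduct_mulVec_eq_ite {m : Type*} [Fintype m]
    (hw : ∀ i j, w i ⬝ᵥ w j = if i = j then 1 else 0) {Y : Matrix m ι ℝ} {μ : ι → ℝ}
    (hY : ∀ k, (Yᵀ * Y) *ᵥ w k = μ k • w k) (j l : ι) :
    (Y *ᵥ w j) ⬝ᵥ (Y *ᵥ w l) = if j = l then μ l else 0 := by
  rw [← vecMul_transpose, ← dotProduct_mulVec, mulVec_mulVec, hY, dotProduct_smul, hw,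
    smul_eq_mul, mul_ite, mul_one, mul_zero]

end Orthonormal

theorem exists_orthonormal_eigenbasis_antitone {m : ℕ} {C : Matrix (Fin m) (Fin m) ℝ}
    (hC : C.IsHermitian) : ∃ (μ : Fin m → ℝ) (w : Fin m → Fin m → ℝ), Antitone μ ∧
      (∀ i j, w i ⬝ᵥ w j = if i = j then 1 else 0) ∧ ∀ k, C *ᵥ w k = μ k • w k := by
  have hT := isSymmetric_toEuclideanLin_iff.mpr hC
  refine ⟨hT.eigenvalues finrank_euclideanSpace_fin,
    fun k => (hT.eigenvectorBasis finrank_euclideanSpace_fin k).ofLp,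
    hT.eigenvalues_antitone _, fun i j => ?_, fun k => ?_⟩
  · simpa [EuclideanSpace.inner_eq_star_dotProduct, dotProduct_comm] using
      orthonormal_iff_ite.mp (hT.eigenvectorBasis finrank_euclideanSpace_fin).orthonormal i j
  · have h := congr_arg WithLp.ofLp (hT.apply_eigenvectorBasis finrank_euclideanSpace_fin k)
    simp only [toLpLin_apply] at h
    exact h

theorem sum_sq_sub_mul_transpose_eq {m k : Type*} [Fintype m] [Fintype k] (A : Matrix m m ℝ)
    (Y : Matrix m k ℝ) : ∑ i, ∑ j, ((A - Y * Yᵀ) i j) ^ 2 =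
      trace (Aᵀ * A) - 2 * trace (Yᵀ * A * Y) + trace (Yᵀ * Y * (Yᵀ * Y)) := by
  have hsq : ∑ i, ∑ j, ((A - Y * Yᵀ) i j) ^ 2 = trace ((A - Y * Yᵀ)ᵀ * (A - Y * Yᵀ)) := by
    simp only [trace, diag_apply, mul_apply, transpose_apply, sq]
    exact sum_comm
  have h2 : trace (Y * Yᵀ * A) = trace (Yᵀ * A * Y) := by
    rw [Matrix.mul_assoc, trace_mul_comm]
  have h1 : trace (Aᵀ * (Y * Yᵀ)) = trace (Yᵀ * A * Y) := by
    rw [← trace_transpose, transpose_mul, transpose_mul, transpose_transpose,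
      transpose_transpose, h2]
  have h3 : trace (Y * Yᵀ * (Y * Yᵀ)) = trace (Yᵀ * Y * (Yᵀ * Y)) := by
    rw [Matrix.mul_assoc, trace_mul_comm]
    simp only [Matrix.mul_assoc]
  rw [hsq, transpose_sub, transpose_mul, transpose_transpose, sub_mul, mul_sub, mul_sub,
    trace_sub, trace_sub, trace_sub, h1, h2, h3]
  ring

theorem sum_sq_sub_mul_transpose_add_trace_eq {m k : Type*} [Fintype m] [DecidableEq m]
    [Fintype k] [DecidableEq k] {A : Matrix m m ℝ} {B : Matrix k k ℝ} {s : m → ℝ} {d : k → ℝ}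
    {u : m → m → ℝ} {v : k → k → ℝ} (hu : ∀ i j, u i ⬝ᵥ u j = if i = j then 1 else 0)
    (hv : ∀ i j, v i ⬝ᵥ v j = if i = j then 1 else 0) (hAu : ∀ i, A *ᵥ u i = s i • u i)
    (hBv : ∀ j, B *ᵥ v j = d j • v j) (Y : Matrix m k ℝ) :
    ∑ i, ∑ j, ((A - Y * Yᵀ) i j) ^ 2 + 2 * trace (B * (Yᵀ * Y)) =
      ∑ i, s i ^ 2 - 2 * trace (Yᵀ * A * Y) + trace (Yᵀ * Y * (Yᵀ * Y)) +
        2 * ∑ j, d j * (v j ⬝ᵥ (Yᵀ * Y) *ᵥ v j) := by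
  rw [sum_sq_sub_mul_transpose_eq, trace_mul_comm B, trace_mul_eq_sum_of_mulVec_eq_smul hv hBv,
    trace_mul_eq_sum_of_mulVec_eq_smul hu hAu]
  simp [dotProduct_mulVec, vecMul_transpose, hAu, hu, sq]

theorem trace_transpose_mul_mul_le {n r : ℕ} (hr : r ≤ n) {A : Matrix (Fin n) (Fin n) ℝ}
    {s : Fin n → ℝ} {u : Fin n → Fin n → ℝ} (hu : ∀ i j, u i ⬝ᵥ u j = if i = j then 1 else 0)
    (hAu : ∀ i, A *ᵥ u i = s i • u i) (hs : Antitone s) (hs0 : ∀ i, 0 ≤ s i)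
    {Y : Matrix (Fin n) (Fin r) ℝ} {μ : Fin r → ℝ} {w : Fin r → Fin r → ℝ}
    (hw : ∀ i j, w i ⬝ᵥ w j = if i = j then 1 else 0) (hμ : Antitone μ) (hμ0 : ∀ k, 0 ≤ μ k)
    (hY : ∀ k, (Yᵀ * Y) *ᵥ w k = μ k • w k) :
    trace (Yᵀ * A * Y) ≤ ∑ j, s (Fin.castLE hr j) * μ j := by
  have hz := mulVec_dotProduct_mulVec_eq_ite hw hY
  set P : Fin n → Fin r → ℝ := fun i k => (u i ⬝ᵥ Y *ᵥ w k) ^ 2 / μ k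
  -- `Y w_k = 0` whenever `μ k = 0`, so the junk value `x / 0 = 0` in `P` is harmless
  have hP : ∀ i k, (u i ⬝ᵥ Y *ᵥ w k) ^ 2 = μ k * P i k := fun i k => by
    rcases eq_or_ne (μ k) 0 with h | h
    · have h0 : Y *ᵥ w k = 0 := by simpa [h] using hz k k
      simp [h0, h]
    · simp only [P]
      field_simp
  rw [trace_transpose_mul_mul_eq_sum hw]
  simp_rw [dotProduct_mulVec_eq_sum_of_mulVec_eq_smul hu hAu, hP, ← mul_assoc]
  rw [sum_comm]
  refine sum_sum_mul_le_of_substochastic hr hs hs0 hμ hμ0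
    (fun i k => div_nonneg (sq_nonneg _) (hμ0 k)) (fun i => ?_) (fun k => ?_)
  · simpa [hz, hu] using sum_sq_dotProduct_div_le (z := fun k => Y *ᵥ w k)
      (fun j l hjl => by simp [hz, hjl]) (u i)
  · rw [← sum_div, sum_sq_dotProduct_eq hu, hz, if_pos rfl]
    exact div_self_le_one _

theorem sum_mul_le_sum_mul_dotProduct_mulVec {r : ℕ} {d : Fin r → ℝ} {v : Fin r → Fin r → ℝ}
    (hv : ∀ i j, v i ⬝ᵥ v j = if i = j then 1 else 0) (hd : Monotone d)
    {C : Matrix (Fin r) (Fin r) ℝ} {μ : Fin r → ℝ} {w : Fin r → Fin r → ℝ}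
    (hw : ∀ i j, w i ⬝ᵥ w j = if i = j then 1 else 0) (hμ : Antitone μ) (hμ0 : ∀ k, 0 ≤ μ k)
    (hC : ∀ k, C *ᵥ w k = μ k • w k) :
    ∑ j, d j * μ j ≤ ∑ j, d j * (v j ⬝ᵥ C *ᵥ v j) := by
  simp_rw [dotProduct_mulVec_eq_sum_of_mulVec_eq_smul hw hC, mul_sum, ← mul_assoc]
  refine sum_mul_le_sum_sum_mul_of_doublyStochastic hd hμ hμ0
    (P := fun j k => (w k ⬝ᵥ v j) ^ 2) (fun _ _ => sq_nonneg _) (fun j => ?_) (fun k => ?_)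
  · rw [sum_sq_dotProduct_eq hw, hv, if_pos rfl]
  · simp_rw [dotProduct_comm (w k)]
    rw [sum_sq_dotProduct_eq hv, hw, if_pos rfl]

theorem two_mul_mul_sub_sq_le_max_sq (x : ℝ) {t : ℝ} (ht : 0 ≤ t) :
    2 * x * t - t ^ 2 ≤ max x 0 ^ 2 := by
  rcases le_total x 0 with h | h
  · rw [max_eq_right h]
    nlinarith
  · rw [max_eq_left h]
    nlinarith [sq_nonneg (x - t)]

theorem two_mul_mul_max_sub_sq (x : ℝ) : 2 * x * max x 0 - max x 0 ^ 2 = max x 0 ^ 2 := by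
  rcases le_total x 0 with h | h
  · simp [max_eq_right h]
  · rw [max_eq_left h]
    ring

theorem sum_sq_sub_sum_max_sq_le {n r : ℕ} (hr : r ≤ n) {A : Matrix (Fin n) (Fin n) ℝ}
    {B : Matrix (Fin r) (Fin r) ℝ} {s : Fin n → ℝ} {d : Fin r → ℝ} {u : Fin n → Fin n → ℝ}
    {v : Fin r → Fin r → ℝ} (hu : ∀ i j, u i ⬝ᵥ u j = if i = j then 1 else 0)
    (hv : ∀ i j, v i ⬝ᵥ v j = if i = j then 1 else 0) (hAu : ∀ i, A *ᵥ u i = s i • u i)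
    (hBv : ∀ j, B *ᵥ v j = d j • v j) (hs : Antitone s) (hs0 : ∀ i, 0 ≤ s i)
    (hd : Monotone d) (Y : Matrix (Fin n) (Fin r) ℝ) :
    ∑ i, s i ^ 2 - ∑ j, max (s (Fin.castLE hr j) - d j) 0 ^ 2 ≤
      ∑ i, ∑ j, ((A - Y * Yᵀ) i j) ^ 2 + 2 * trace (B * (Yᵀ * Y)) := by
  obtain ⟨μ, w, hμ, hw, hY⟩ :=
    exists_orthonormal_eigenbasis_antitone
      (by simpa using isHermitian_conjTranspose_mul_self Y : (Yᵀ * Y).IsHermitian)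
  have hμ0 : ∀ k, 0 ≤ μ k := fun k => by
    have h := mulVec_dotProduct_mulVec_eq_ite hw hY k k
    rw [if_pos rfl] at h
    exact h ▸ sum_nonneg fun i _ => mul_self_nonneg _
  have hA := trace_transpose_mul_mul_le hr hu hAu hs hs0 hw hμ hμ0 hY
  have hB := sum_mul_le_sum_mul_dotProduct_mulVec hv hd hw hμ hμ0 hY
  have hCC : trace (Yᵀ * Y * (Yᵀ * Y)) = ∑ k, μ k ^ 2 := by
    simp [trace_mul_eq_sum_of_mulVec_eq_smul hw hY, hY, hw, sq]
  have hpt : ∑ j, (2 * (s (Fin.castLE hr j) - d j) * μ j - μ j ^ 2) ≤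
      ∑ j, max (s (Fin.castLE hr j) - d j) 0 ^ 2 :=
    sum_le_sum fun j _ => two_mul_mul_sub_sq_le_max_sq _ (hμ0 j)
  simp only [sub_mul, mul_sub, sum_sub_distrib, mul_assoc, ← mul_sum] at hpt
  rw [sum_sq_sub_mul_transpose_add_trace_eq hu hv hAu hBv, hCC]
  linarith

theorem exists_sum_sq_sub_mul_transpose_add_trace_eq {n r : ℕ} (hr : r ≤ n)
    {A : Matrix (Fin n) (Fin n) ℝ} {B : Matrix (Fin r) (Fin r) ℝ} {s : Fin n → ℝ}
    {d : Fin r → ℝ} {u : Fin n → Fin n → ℝ} {v : Fin r → Fin r → ℝ}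
    (hu : ∀ i j, u i ⬝ᵥ u j = if i = j then 1 else 0)
    (hv : ∀ i j, v i ⬝ᵥ v j = if i = j then 1 else 0) (hAu : ∀ i, A *ᵥ u i = s i • u i)
    (hBv : ∀ j, B *ᵥ v j = d j • v j) :
    ∃ Y : Matrix (Fin n) (Fin r) ℝ, ∑ i, ∑ j, ((A - Y * Yᵀ) i j) ^ 2 + 2 * trace (B * (Yᵀ * Y)) =
      ∑ i, s i ^ 2 - ∑ j, max (s (Fin.castLE hr j) - d j) 0 ^ 2 := by
  set e : Fin r → ℝ := fun j => max (s (Fin.castLE hr j) - d j) 0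
  have huc : ∀ i j, u (Fin.castLE hr i) ⬝ᵥ u (Fin.castLE hr j) = if i = j then 1 else 0 :=
    fun i j => by simp [hu, Fin.castLE_inj]
  set Y := ∑ j, √(e j) • vecMulVec (u (Fin.castLE hr j)) (v j)
  have hYv : ∀ l, Y *ᵥ v l = √(e l) • u (Fin.castLE hr l) := sum_smul_vecMulVec_mulVec hv _ _
  have hYu : ∀ l, Yᵀ *ᵥ u (Fin.castLE hr l) = √(e l) • v l := fun l => by
    simpa [Y, transpose_sum, transpose_smul, transpose_vecMulVec] using
      sum_smul_vecMulVec_mulVec huc (fun j => √(e j)) v l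
  have hY : ∀ l, (Yᵀ * Y) *ᵥ v l = e l • v l := fun l => by
    rw [← mulVec_mulVec, hYv, mulVec_smul, hYu, smul_smul, Real.mul_self_sqrt (le_max_right _ _)]
  refine ⟨Y, ?_⟩
  rw [sum_sq_sub_mul_transpose_add_trace_eq hu hv hAu hBv, trace_transpose_mul_mul_eq_sum hv,
    trace_mul_eq_sum_of_mulVec_eq_smul hv hY]
  simp only [hYv, hY, mulVec_smul, hAu, dotProduct_smul, smul_dotProduct, hu, hv, if_pos,
    smul_eq_mul, mul_one]
  have hse : ∀ j, √(e j) * (s (Fin.castLE hr j) * √(e j)) = s (Fin.castLE hr j) * e j :=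
    fun j => by rw [mul_left_comm, Real.mul_self_sqrt (le_max_right _ _)]
  have hpt : ∑ j, (2 * (s (Fin.castLE hr j) - d j) * e j - e j ^ 2) = ∑ j, e j ^ 2 :=
    sum_congr rfl fun j _ => two_mul_mul_max_sub_sq _
  simp only [sub_mul, mul_sub, sum_sub_distrib, mul_assoc, ← mul_sum] at hpt
  simp only [hse, ← sq]
  change _ = _ - ∑ j, e j ^ 2
  linarith

theorem stmt_1_general (n r : ℕ) (hr : r ≤ n)
    (A : Matrix (Fin n) (Fin n) ℝ) (B : Matrix (Fin r) (Fin r) ℝ)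
    (s : Fin n → ℝ) (d : Fin r → ℝ)
    (u : Fin n → Fin n → ℝ) (v : Fin r → Fin r → ℝ)
    (hu : ∀ i j, u i ⬝ᵥ u j = if i = j then (1 : ℝ) else 0)
    (hv : ∀ i j, v i ⬝ᵥ v j = if i = j then (1 : ℝ) else 0)
    (hA : A = ∑ i, s i • Matrix.vecMulVec (u i) (u i))
    (hB : B = ∑ i, d i • Matrix.vecMulVec (v i) (v i))
    (hs : ∀ i j : Fin n, i ≤ j → s j ≤ s i) (hsn : ∀ i, 0 ≤ s i)
    (hd : ∀ i j : Fin r, i ≤ j → d i ≤ d j) :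
    IsLeast {c : ℝ | ∃ Y : Matrix (Fin n) (Fin r) ℝ,
        c = (∑ i, ∑ j, ((A - Y * Yᵀ) i j) ^ 2) + 2 * Matrix.trace (B * (Yᵀ * Y))}
      ((∑ i, (s i) ^ 2) - ∑ i : Fin r, (max (s (Fin.castLE hr i) - d i) 0) ^ 2) := by
  have hAu : ∀ i, A *ᵥ u i = s i • u i := by
    subst hA
    exact sum_smul_vecMulVec_mulVec hu s u
  have hBv : ∀ j, B *ᵥ v j = d j • v j := by
    subst hB
    exact sum_smul_vecMulVec_mulVec hv d v
  refine ⟨?_, ?_⟩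
  · obtain ⟨Y, hY⟩ := exists_sum_sq_sub_mul_transpose_add_trace_eq hr hu hv hAu hBv
    exact ⟨Y, hY.symm⟩
  · rintro c ⟨Y, rfl⟩
    exact sum_sq_sub_sum_max_sq_le hr hu hv hAu hBv hs hsn hd Y

theorem stmt_1 (n r : ℕ) (hr : r ≤ n)
    (A : Matrix (Fin n) (Fin n) ℝ) (B : Matrix (Fin r) (Fin r) ℝ)
    (s : Fin n → ℝ) (d : Fin r → ℝ)
    (u : Fin n → Fin n → ℝ) (v : Fin r → Fin r → ℝ)
    (hu : ∀ i j, u i ⬝ᵥ u j = if i = j then (1 : ℝ) else 0)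
    (hv : ∀ i j, v i ⬝ᵥ v j = if i = j then (1 : ℝ) else 0)
    (hA : A = ∑ i, s i • Matrix.vecMulVec (u i) (u i))
    (hB : B = ∑ i, d i • Matrix.vecMulVec (v i) (v i))
    (hs : ∀ i j : Fin n, i ≤ j → s j ≤ s i) (hsn : ∀ i, 0 ≤ s i)
    (hd : ∀ i j : Fin r, i ≤ j → d i ≤ d j) (hdn : ∀ i, 0 ≤ d i) :
    IsLeast {c : ℝ | ∃ Y : Matrix (Fin n) (Fin r) ℝ,
        c = (∑ i, ∑ j, ((A - Y * Yᵀ) i j) ^ 2) + 2 * Matrix.trace (B * (Yᵀ * Y))}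
      ((∑ i, (s i) ^ 2) - ∑ i : Fin r, (max (s (Fin.castLE hr i) - d i) 0) ^ 2) :=
  stmt_1_general n r hr A B s d u v hu hv hA hB hs hsn hd
end

section
/- Let S and D be diagonal n×n and r×r matrices respectively, with S having nonnegative diagonal entries in descending order and D nonnegative diagonal entries in ascending order (r ≤ n). Then the minimum of φ(X) = ‖S − XX^T‖_F² + 2 tr(D X^T X) over scaled permutation matrices X ∈ R^{n×r} equals Σ_{i=1}^n s_i² − Σ_{i=1}^r [(s_i − d_i)₊]², attained at X = diag(√((s_i − d_i)₊)). -/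
open Matrix Finset

lemma hsq_super (a b c e : ℝ) (hab : b ≤ a) (hce : e ≤ c) :
    max (a+e) 0^2 + max (b+c) 0^2 ≤ max (a+c) 0^2 + max (b+e) 0^2 := by
  rcases le_total (a+e) 0 with h1 | h1 <;> rcases le_total (b+c) 0 with h2 | h2 <;>
    rcases le_total (a+c) 0 with h3 | h3 <;> rcases le_total (b+e) 0 with h4 | h4 <;>
    simp [max_eq_left, max_eq_right, h1, h2, h3, h4] <;> nlinarith

lemma hsq_mono {x y : ℝ} (h : x ≤ y) : max x 0 ^ 2 ≤ max y 0 ^ 2 := by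
  have := le_max_right x 0
  nlinarith [max_le_max h (le_refl (0:ℝ)), le_max_right y 0]

lemma rearr (n : ℕ) (s : Fin n → ℝ) (hs : ∀ i j : Fin n, i ≤ j → s j ≤ s i) :
    ∀ (r : ℕ) (hr : r ≤ n) (d : Fin r → ℝ) (hd : ∀ i j : Fin r, i ≤ j → d i ≤ d j)
      (π : Fin r → Fin n) (hπ : Function.Injective π),
      ∑ j, max (s (π j) - d j) 0 ^ 2 ≤ ∑ j, max (s (Fin.castLE hr j) - d j) 0 ^ 2 := by
  intro r
  induction r with
  | zero => intro _ _ _ _ _; simp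
  | succ r ih =>
    intro hr d hd π hπ
    obtain ⟨j₁, hj₁⟩ : ∃ j₁, ∀ j, π j ≤ π j₁ := Finite.exists_max π
    set π' : Fin (r+1) → Fin n := π ∘ Equiv.swap j₁ (Fin.last r) with hπ'def
    have hπ'inj : Function.Injective π' := hπ.comp (Equiv.injective _)
    -- Step A: swapping increases the sum
    have stepA : ∑ j, max (s (π j) - d j) 0 ^ 2 ≤ ∑ j, max (s (π' j) - d j) 0 ^ 2 := by
      rcases eq_or_ne j₁ (Fin.last r) with h | h
      · subst h; simp [hπ'def, Equiv.swap_self]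
      · have hmem : Fin.last r ∈ (univ : Finset (Fin (r+1))).erase j₁ := by
          simp [Ne.symm h]
        have split : ∀ f : Fin (r+1) → ℝ,
            ∑ j, f j = f j₁ + (f (Fin.last r) + ∑ j ∈ ((univ : Finset (Fin (r+1))).erase j₁).erase (Fin.last r), f j) := by
          intro f
          rw [← Finset.add_sum_erase _ f (mem_univ j₁), ← Finset.add_sum_erase _ f hmem]
        rw [split, split]
        have heq : ∀ j ∈ ((univ : Finset (Fin (r+1))).erase j₁).erase (Fin.last r),
            max (s (π j) - d j) 0 ^ 2 = max (s (π' j) - d j) 0 ^ 2 := by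
          intro j hj
          simp only [mem_erase] at hj
          simp [hπ'def, Equiv.swap_apply_of_ne_of_ne hj.2.1 hj.1]
        rw [Finset.sum_congr rfl heq]
        have h1 : π' j₁ = π (Fin.last r) := by simp [hπ'def]
        have h2 : π' (Fin.last r) = π j₁ := by simp [hπ'def]
        rw [h1, h2]
        have hba : s (π j₁) ≤ s (π (Fin.last r)) := hs _ _ (hj₁ _)
        have hec : d j₁ ≤ d (Fin.last r) := hd _ _ (Fin.le_last _)
        have := hsq_super (s (π (Fin.last r))) (s (π j₁)) (-(d j₁)) (-(d (Fin.last r))) hba (by linarith)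
        simp only [← sub_eq_add_neg] at this
        linarith [this]
    refine stepA.trans ?_
    -- split off last
    rw [Fin.sum_univ_castSucc, Fin.sum_univ_castSucc (f := fun j => max (s (Fin.castLE hr j) - d j) 0 ^ 2)]
    have hr' : r ≤ n := Nat.le_of_succ_le hr
    have hlast : max (s (π' (Fin.last r)) - d (Fin.last r)) 0 ^ 2
        ≤ max (s (Fin.castLE hr (Fin.last r)) - d (Fin.last r)) 0 ^ 2 := by
      have hπmax : (r : ℕ) ≤ (π j₁ : ℕ) := by
        by_contra hcon
        push_neg at hcon
        have hall : ∀ j : Fin (r+1), (π j : ℕ) < r := fun j =>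
          lt_of_le_of_lt (Fin.le_iff_val_le_val.mp (hj₁ j)) hcon
        have hinj2 : Function.Injective (fun j : Fin (r+1) => (⟨(π j : ℕ), hall j⟩ : Fin r)) := by
          intro a b hab
          simp only [Fin.mk.injEq] at hab
          exact hπ (Fin.ext hab)
        have hcard := Fintype.card_le_of_injective _ hinj2
        simp only [Fintype.card_fin] at hcard
        omega
      have : (Fin.castLE hr (Fin.last r) : Fin n) ≤ π j₁ := by
        rw [Fin.le_iff_val_le_val]
        exact hπmax
      have hsle : s (π j₁) ≤ s (Fin.castLE hr (Fin.last r)) := hs _ _ this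
      have h2 : π' (Fin.last r) = π j₁ := by
        show π (Equiv.swap j₁ (Fin.last r) (Fin.last r)) = π j₁
        rw [Equiv.swap_apply_right]
      rw [h2]
      exact hsq_mono (by linarith)
    have hih := ih hr' (fun j => d j.castSucc)
      (fun i j hij => hd _ _ (Fin.castSucc_le_castSucc_iff.mpr hij))
      (fun j => π' j.castSucc) (hπ'inj.comp (Fin.castSucc_injective r))
    have hcast : ∀ j : Fin r, Fin.castLE hr' j = Fin.castLE hr j.castSucc := by
      intro j; rfl
    calc ∑ j : Fin r, max (s (π' j.castSucc) - d j.castSucc) 0 ^ 2 + max (s (π' (Fin.last r)) - d (Fin.last r)) 0 ^ 2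
        ≤ ∑ j : Fin r, max (s (Fin.castLE hr' j) - d j.castSucc) 0 ^ 2 + max (s (Fin.castLE hr (Fin.last r)) - d (Fin.last r)) 0 ^ 2 := by
          exact add_le_add hih hlast
      _ = ∑ j : Fin r, max (s (Fin.castLE hr j.castSucc) - d j.castSucc) 0 ^ 2 + max (s (Fin.castLE hr (Fin.last r)) - d (Fin.last r)) 0 ^ 2 := rfl

lemma extend_inj {r n : ℕ} (hr : r ≤ n) (J : Finset (Fin r)) (ρ : Fin r → Fin n)
    (hρ : Set.InjOn ρ J) :
    ∃ π : Fin r → Fin n, Function.Injective π ∧ ∀ j ∈ J, π j = ρ j := by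
  classical
  have hK : (J.image ρ).card = J.card := Finset.card_image_of_injOn hρ
  have hJr : J.card ≤ r := by simpa using Finset.card_le_univ J
  have hc : (Jᶜ : Finset (Fin r)).card ≤ ((J.image ρ)ᶜ : Finset (Fin n)).card := by
    rw [Finset.card_compl, Finset.card_compl, hK, Fintype.card_fin, Fintype.card_fin]
    omega
  set e1 := (Jᶜ : Finset (Fin r)).orderIsoOfFin rfl with he1
  set e2 := ((J.image ρ)ᶜ : Finset (Fin n)).orderIsoOfFin rfl with he2
  refine ⟨fun j => if h : j ∈ J then ρ j
      else (e2 (Fin.castLE hc (e1.symm ⟨j, Finset.mem_compl.mpr h⟩)) : Fin n), ?_, ?_⟩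
  · intro a b hab
    by_cases ha : a ∈ J <;> by_cases hb : b ∈ J <;> simp only [ha, hb, dif_pos, dif_neg,
      not_false_iff] at hab
    · exact hρ ha hb hab
    · exfalso
      have h1 : ρ a ∈ J.image ρ := Finset.mem_image_of_mem ρ ha
      have h2 := Finset.coe_mem (e2 (Fin.castLE hc (e1.symm ⟨b, Finset.mem_compl.mpr hb⟩)))
      rw [← hab] at h2
      exact (Finset.mem_compl.mp h2) h1
    · exfalso
      have h1 : ρ b ∈ J.image ρ := Finset.mem_image_of_mem ρ hb
      have h2 := Finset.coe_mem (e2 (Fin.castLE hc (e1.symm ⟨a, Finset.mem_compl.mpr ha⟩)))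
      rw [hab] at h2
      exact (Finset.mem_compl.mp h2) h1
    · have h3 := Subtype.coe_injective hab
      have h4 := e2.injective h3
      have h5 := (Fin.castLE_injective hc) h4
      have h6 := e1.symm.injective h5
      simpa using congrArg Subtype.val h6
  · intro j hj
    simp [hj]

lemma phi_eq {n r : ℕ} (s : Fin n → ℝ) (d : Fin r → ℝ) (X : Matrix (Fin n) (Fin r) ℝ)
    (π : Fin r → Fin n) (hπ : Function.Injective π)
    (hext : ∀ i j, X i j ≠ 0 → i = π j) :
    (∑ i, ∑ j, ((Matrix.diagonal s - X * Xᵀ) i j) ^ 2)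
      + 2 * Matrix.trace (Matrix.diagonal d * (Xᵀ * X))
    = (∑ i ∈ (univ : Finset (Fin n)) \ univ.image π, (s i)^2)
      + ∑ j, ((s (π j) - ∑ i, (X i j)^2)^2 + 2 * (d j * ∑ i, (X i j)^2)) := by
  classical
  have h1 : ∀ i k, (X * Xᵀ) i k = if i = k then ∑ j, (X i j)^2 else 0 := by
    intro i k
    rw [Matrix.mul_apply]
    by_cases h : i = k
    · subst h
      simp [Matrix.transpose_apply, sq]
    · rw [if_neg h]
      apply Finset.sum_eq_zero
      intro j _
      rw [Matrix.transpose_apply]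
      by_contra hc
      have hx : X i j ≠ 0 := fun h0 => hc (by simp [h0])
      have hy : X k j ≠ 0 := fun h0 => hc (by simp [h0])
      exact h ((hext i j hx).trans (hext k j hy).symm)
  have h2 : ∀ i, ∑ k, ((Matrix.diagonal s - X * Xᵀ) i k)^2 = (s i - ∑ j, (X i j)^2)^2 := by
    intro i
    rw [Finset.sum_eq_single i]
    · simp [Matrix.sub_apply, h1]
    · intro k _ hk
      have : (Matrix.diagonal s - X * Xᵀ) i k = 0 := by
        simp [Matrix.sub_apply, h1, Matrix.diagonal_apply_ne s (fun h => hk h.symm),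
          if_neg (fun h : i = k => hk h.symm)]
      rw [this]; ring
    · intro h; exact absurd (mem_univ i) h
  have h3 : Matrix.trace (Matrix.diagonal d * (Xᵀ * X)) = ∑ j, d j * ∑ i, (X i j)^2 := by
    rw [Matrix.trace]
    apply Finset.sum_congr rfl
    intro j _
    rw [Matrix.diag_apply, Matrix.diagonal_mul, Matrix.mul_apply]
    congr 1
    apply Finset.sum_congr rfl
    intro i _
    rw [Matrix.transpose_apply, sq]
  have ht : ∀ j, (∑ k, (X (π j) k)^2) = ∑ i, (X i j)^2 := by
    intro j
    have hl : (∑ k, (X (π j) k)^2) = (X (π j) j)^2 := by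
      rw [Finset.sum_eq_single j]
      · intro k _ hk
        by_contra hc
        have hx : X (π j) k ≠ 0 := fun h0 => hc (by simp [h0])
        exact hk (hπ (hext (π j) k hx).symm)
      · intro h; exact absurd (mem_univ j) h
    have hu : (∑ i, (X i j)^2) = (X (π j) j)^2 := by
      rw [Finset.sum_eq_single (π j)]
      · intro i _ hi
        by_contra hc
        have hx : X i j ≠ 0 := fun h0 => hc (by simp [h0])
        exact hi (hext i j hx)
      · intro h; exact absurd (mem_univ (π j)) h
    rw [hl, hu]
  have ht0 : ∀ i, i ∉ (univ : Finset (Fin r)).image π → (∑ j, (X i j)^2) = 0 := by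
    intro i hi
    apply Finset.sum_eq_zero
    intro j _
    have hx : X i j = 0 := by
      by_contra hc
      have hm := Finset.mem_image_of_mem π (mem_univ j)
      rw [← hext i j hc] at hm
      exact hi hm
    simp [hx]
  have hA : ∑ i, ∑ k, ((Matrix.diagonal s - X * Xᵀ) i k)^2
      = ∑ i, (s i - ∑ j, (X i j)^2)^2 := Finset.sum_congr rfl (fun i _ => h2 i)
  have hB : ∑ i, (s i - ∑ j, (X i j)^2)^2
      = (∑ i ∈ (univ : Finset (Fin n)) \ univ.image π, (s i)^2)
        + ∑ j, (s (π j) - ∑ i, (X i j)^2)^2 := by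
    rw [← Finset.sum_sdiff (Finset.subset_univ ((univ : Finset (Fin r)).image π))]
    congr 1
    · apply Finset.sum_congr rfl
      intro i hi
      rw [ht0 i (Finset.mem_sdiff.mp hi).2]
      ring
    · rw [Finset.sum_image (fun a _ b _ h => hπ h)]
      apply Finset.sum_congr rfl
      intro j _
      rw [ht j]
  rw [hA, hB, h3, Finset.sum_add_distrib, Finset.mul_sum]
  ring

lemma perj_ineq (S D v : ℝ) (hD : 0 ≤ D) (hv : 0 ≤ v) :
    S^2 - max (S-D) 0^2 ≤ (S - v)^2 + 2*(D*v) := by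
  rcases le_total (S-D) 0 with h | h
  · rw [max_eq_right h]; nlinarith
  · rw [max_eq_left h]; nlinarith [sq_nonneg (v - (S-D))]

lemma perj_eq (S D : ℝ) :
    (S - max (S-D) 0)^2 + 2*(D * max (S-D) 0) = S^2 - max (S-D) 0^2 := by
  rcases le_total (S-D) 0 with h | h
  · rw [max_eq_right h]; ring
  · rw [max_eq_left h]; ring

lemma sum_split {n r : ℕ} (s : Fin n → ℝ) (π : Fin r → Fin n) (hπ : Function.Injective π) :
    (∑ i ∈ (univ : Finset (Fin n)) \ univ.image π, (s i)^2) + ∑ j, (s (π j))^2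
      = ∑ i, (s i)^2 := by
  rw [← Finset.sum_image (f := fun i => (s i)^2) (fun a _ b _ h => hπ h)]
  exact Finset.sum_sdiff (Finset.subset_univ _)

theorem stmt_2 (n r : ℕ) (hr : r ≤ n) (s : Fin n → ℝ) (d : Fin r → ℝ)
    (hs : ∀ i j : Fin n, i ≤ j → s j ≤ s i) (hsn : ∀ i, 0 ≤ s i)
    (hd : ∀ i j : Fin r, i ≤ j → d i ≤ d j) (hdn : ∀ i, 0 ≤ d i) :
    let φ : Matrix (Fin n) (Fin r) ℝ → ℝ := fun X =>
      (∑ i, ∑ j, ((Matrix.diagonal s - X * Xᵀ) i j) ^ 2)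
        + 2 * Matrix.trace (Matrix.diagonal d * (Xᵀ * X));
    let Xstar : Matrix (Fin n) (Fin r) ℝ := Matrix.of fun i j =>
      if (i : ℕ) = (j : ℕ) then Real.sqrt (max (s i - d j) 0) else 0;
    IsLeast {c : ℝ | ∃ X : Matrix (Fin n) (Fin r) ℝ,
        (∀ i j k, X i j ≠ 0 → X i k ≠ 0 → j = k) ∧
        (∀ i j k, X i k ≠ 0 → X j k ≠ 0 → i = j) ∧
        c = φ X}
      ((∑ i, (s i) ^ 2) - ∑ i : Fin r, (max (s (Fin.castLE hr i) - d i) 0) ^ 2) ∧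
    φ Xstar = (∑ i, (s i) ^ 2) - ∑ i : Fin r, (max (s (Fin.castLE hr i) - d i) 0) ^ 2 := by
  classical
  intro φ Xstar
  -- the value at Xstar
  have hXstar_apply : ∀ i j, Xstar i j =
      if (i : ℕ) = (j : ℕ) then Real.sqrt (max (s i - d j) 0) else 0 := fun i j => rfl
  have hext_star : ∀ i j, Xstar i j ≠ 0 → i = Fin.castLE hr j := by
    intro i j hij
    rw [hXstar_apply] at hij
    by_contra hc
    have hv : (i : ℕ) ≠ (j : ℕ) := by
      intro h; exact hc (Fin.ext (by simpa using h))
    rw [if_neg hv] at hij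
    exact hij rfl
  have hu_star : ∀ j, (∑ i, (Xstar i j)^2) = max (s (Fin.castLE hr j) - d j) 0 := by
    intro j
    rw [Finset.sum_eq_single (Fin.castLE hr j)]
    · rw [hXstar_apply]
      rw [if_pos (by simp)]
      exact Real.sq_sqrt (le_max_right _ _)
    · intro i _ hi
      have h0 : Xstar i j = 0 := by
        rw [hXstar_apply, if_neg]
        intro h
        exact hi (Fin.ext (by simpa using h))
      rw [h0]; ring
    · intro h; exact absurd (mem_univ _) h
  have heq : φ Xstar = (∑ i, (s i) ^ 2)
      - ∑ i : Fin r, (max (s (Fin.castLE hr i) - d i) 0) ^ 2 := by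
    have h1 := phi_eq s d Xstar (Fin.castLE hr) (Fin.castLE_injective hr) hext_star
    have h2 : φ Xstar = (∑ i, ∑ j, ((Matrix.diagonal s - Xstar * Xstarᵀ) i j) ^ 2)
        + 2 * Matrix.trace (Matrix.diagonal d * (Xstarᵀ * Xstar)) := rfl
    rw [h2, h1]
    have h3 : ∀ j : Fin r, (s (Fin.castLE hr j) - ∑ i, (Xstar i j)^2)^2
        + 2 * (d j * ∑ i, (Xstar i j)^2)
        = (s (Fin.castLE hr j))^2 - max (s (Fin.castLE hr j) - d j) 0 ^ 2 := by
      intro j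
      rw [hu_star j]
      exact perj_eq _ _
    rw [Finset.sum_congr rfl (fun j _ => h3 j), Finset.sum_sub_distrib]
    have h4 := sum_split s (Fin.castLE hr) (Fin.castLE_injective hr)
    linarith [h4]
  refine ⟨⟨⟨Xstar, ?_, ?_, heq.symm⟩, ?_⟩, heq⟩
  · -- row condition
    intro i j k hj hk
    have h1 := hext_star i j hj
    have h2 := hext_star i k hk
    exact (Fin.castLE_injective hr) (h1 ▸ h2 ▸ rfl)
  · -- column condition
    intro i j k hik hjk
    exact (hext_star i k hik).trans (hext_star j k hjk).symm
  · -- lower bound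
    rintro c ⟨X, hrow, hcol, rfl⟩
    -- build the injection π
    set ρ : Fin r → Fin n := fun j =>
      if h : ∃ i, X i j ≠ 0 then h.choose else Fin.castLE hr j with hρdef
    have hρspec : ∀ j (h : ∃ i, X i j ≠ 0), X (ρ j) j ≠ 0 := by
      intro j h
      have : ρ j = h.choose := dif_pos h
      rw [this]
      exact h.choose_spec
    obtain ⟨π, hπinj, hπJ⟩ := extend_inj hr
      ((univ : Finset (Fin r)).filter (fun j => ∃ i, X i j ≠ 0)) ρ (by
        intro a ha b hb hab
        simp only [coe_filter, Set.mem_setOf_eq, mem_univ, true_and] at ha hb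
        have h1 := hρspec a ha
        have h2 := hρspec b hb
        rw [hab] at h1
        exact hrow (ρ b) a b h1 h2)
    have hext : ∀ i j, X i j ≠ 0 → i = π j := by
      intro i j hij
      have hj : j ∈ (univ : Finset (Fin r)).filter (fun j => ∃ i, X i j ≠ 0) := by
        simp only [mem_filter, mem_univ, true_and]
        exact ⟨i, hij⟩
      rw [hπJ j hj]
      exact hcol i (ρ j) j hij (hρspec j ⟨i, hij⟩)
    have h1 := phi_eq s d X π hπinj hext
    have h2 : φ X = (∑ i, ∑ j, ((Matrix.diagonal s - X * Xᵀ) i j) ^ 2)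
        + 2 * Matrix.trace (Matrix.diagonal d * (Xᵀ * X)) := rfl
    rw [h2, h1]
    have h3 : ∑ j, ((s (π j))^2 - max (s (π j) - d j) 0 ^ 2)
        ≤ ∑ j, ((s (π j) - ∑ i, (X i j)^2)^2 + 2 * (d j * ∑ i, (X i j)^2)) := by
      apply Finset.sum_le_sum
      intro j _
      exact perj_ineq _ _ _ (hdn j) (Finset.sum_nonneg (fun i _ => sq_nonneg _))
    have h4 := sum_split s π hπinj
    have h5 := rearr n s hs r hr d hd π hπinj
    rw [Finset.sum_sub_distrib] at h3
    linarith [h3, h4, h5]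
end

section
/- Let X ∈ R^{n×r} satisfy (S − XX^T)X = XD where S is real symmetric n×n and D is diagonal r×r. Then there exists Y ∈ R^{n×r} with Y^T Y diagonal that also satisfies (S − YY^T)Y = YD, with YY^T = XX^T and ⟨D, Y^T Y⟩ = ⟨D, X^T X⟩. -/
/-! Transposing `Xᵀ (S - X Xᵀ) X = Xᵀ X D` shows that `A = Xᵀ X` commutes with the diagonal
matrix `D`, i.e. `A` is block diagonal for the partition of the indices by the value of the
diagonal entry of `D`. Diagonalizing each block by an orthogonal matrix yields an orthogonal `V`
that is block diagonal for the same partition, hence commutes with `D`, and for which `Vᵀ A V`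
is diagonal. Then `Y = X V` works: `Y Yᵀ = X Xᵀ`, `(S - Y Yᵀ) Y = X D V = Y D`, and
`tr (D Vᵀ A V) = tr (V D Vᵀ A) = tr (D A)`. -/

open Matrix

theorem Matrix.IsHermitian.exists_orthogonal_mul_eq_mul_diagonal {m : Type*} [Fintype m]
    [DecidableEq m] {B : Matrix m m ℝ} (hB : B.IsHermitian) :
    ∃ (U : Matrix m m ℝ) (μ : m → ℝ), Uᵀ * U = 1 ∧ B * U = U * diagonal μ := by
  have hU : (hB.eigenvectorUnitary : Matrix m m ℝ)ᵀ * hB.eigenvectorUnitary = 1 := by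
    simpa [star_eq_conjTranspose] using Unitary.coe_star_mul_self hB.eigenvectorUnitary
  refine ⟨hB.eigenvectorUnitary, hB.eigenvalues, hU, ?_⟩
  have h := congrArg (· * (hB.eigenvectorUnitary : Matrix m m ℝ)) hB.spectral_theorem
  simp only [Unitary.conjStarAlgAut_apply] at h
  rw [h]
  simp [star_eq_conjTranspose, mul_assoc, hU]

theorem Matrix.eq_submatrix_blockDiagonal'_of_apply_eq_zero {ι κ α : Type*} [Zero α]
    [DecidableEq κ] (A : Matrix ι ι α) (f : ι → κ) (hAf : ∀ i j, f i ≠ f j → A i j = 0) :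
    A = (blockDiagonal' fun c => A.submatrix (Subtype.val : {i // f i = c} → ι) Subtype.val
      ).submatrix (Equiv.sigmaFiberEquiv f).symm (Equiv.sigmaFiberEquiv f).symm := by
  have hblock : ∀ x y : Σ c, {i // f i = c},
      blockDiagonal' (fun c => A.submatrix Subtype.val Subtype.val) x y = A x.2 y.2 := by
    rintro ⟨c, i, hi⟩ ⟨c', j, hj⟩
    by_cases hc : c = c'
    · subst hc
      exact blockDiagonal'_apply_eq _ _ _ _
    · rw [blockDiagonal'_apply_ne _ _ _ hc]
      exact (hAf i j (hi ▸ hj ▸ hc)).symm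
  ext i j
  exact (hblock ((Equiv.sigmaFiberEquiv f).symm i) ((Equiv.sigmaFiberEquiv f).symm j)).symm

theorem Matrix.IsHermitian.exists_blockwise_orthogonal_mul_eq_mul_diagonal_of_fintype
    {ι κ : Type*} [Fintype ι] [DecidableEq ι] [Fintype κ] [DecidableEq κ] {A : Matrix ι ι ℝ}
    (hA : A.IsHermitian) (f : ι → κ) (hAf : ∀ i j, f i ≠ f j → A i j = 0) :
    ∃ (V : Matrix ι ι ℝ) (μ : ι → ℝ),
      Vᵀ * V = 1 ∧ (∀ i j, f i ≠ f j → V i j = 0) ∧ A * V = V * diagonal μ := by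
  set e := (Equiv.sigmaFiberEquiv f).symm
  choose U μ hUo hAU using fun c =>
    (hA.submatrix (Subtype.val : {i // f i = c} → ι)).exists_orthogonal_mul_eq_mul_diagonal
  refine ⟨(blockDiagonal' U).submatrix e e, fun i => μ (e i).1 (e i).2, ?_,
    fun i j h => blockDiagonal'_apply_ne U (⟨i, rfl⟩ : {x // f x = f i}) ⟨j, rfl⟩ h, ?_⟩
  · rw [transpose_submatrix, submatrix_mul_equiv, blockDiagonal'_transpose, ← blockDiagonal'_mul,
      show (fun c => (U c)ᵀ * U c) = 1 from funext hUo, blockDiagonal'_one, submatrix_one_equiv]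
  · rw [A.eq_submatrix_blockDiagonal'_of_apply_eq_zero f hAf, submatrix_mul_equiv,
      ← blockDiagonal'_mul, funext hAU, blockDiagonal'_mul, blockDiagonal'_diagonal,
      ← submatrix_mul_equiv (e₂ := e), submatrix_diagonal_equiv]
    rfl

theorem Matrix.IsHermitian.exists_blockwise_orthogonal_mul_eq_mul_diagonal {ι κ : Type*}
    [Fintype ι] [DecidableEq ι] [DecidableEq κ] {A : Matrix ι ι ℝ} (hA : A.IsHermitian)
    (f : ι → κ) (hAf : ∀ i j, f i ≠ f j → A i j = 0) :
    ∃ (V : Matrix ι ι ℝ) (μ : ι → ℝ),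
      Vᵀ * V = 1 ∧ (∀ i j, f i ≠ f j → V i j = 0) ∧ A * V = V * diagonal μ := by
  obtain ⟨V, μ, hVo, hVf, hAV⟩ := hA.exists_blockwise_orthogonal_mul_eq_mul_diagonal_of_fintype
    (Set.rangeFactorization f) fun i j h => hAf i j fun h' => h (Subtype.ext h')
  exact ⟨V, μ, hVo, fun i j h => hVf i j fun h' => h (congrArg Subtype.val h'), hAV⟩

theorem Matrix.commute_diagonal_iff {n R : Type*} [Fintype n] [DecidableEq n] [CommRing R]
    [NoZeroDivisors R] {A : Matrix n n R} {d : n → R} :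
    Commute A (diagonal d) ↔ ∀ i j, d i ≠ d j → A i j = 0 := by
  simp only [Commute, SemiconjBy, ← Matrix.ext_iff, mul_diagonal, diagonal_mul]
  refine forall₂_congr fun i j => ⟨fun h hij => ?_, fun h => ?_⟩
  · have h' : A i j * (d j - d i) = 0 := by rw [mul_sub, h, mul_comm, sub_self]
    exact (mul_eq_zero.1 h').resolve_right (sub_ne_zero.2 (Ne.symm hij))
  · by_cases hij : d i = d j
    · rw [hij, mul_comm]
    · simp [h hij]

theorem Matrix.commute_transpose_mul_self_of_sub_mul_eq {m n R : Type*} [Fintype m] [Fintype n]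
    [CommRing R] {S : Matrix m m R} {D : Matrix n n R} {X : Matrix m n R} (hS : Sᵀ = S)
    (hD : Dᵀ = D) (hX : (S - X * Xᵀ) * X = X * D) : Commute (Xᵀ * X) D := by
  have h : Xᵀ * (S - X * Xᵀ) * X = Xᵀ * X * D := by rw [Matrix.mul_assoc, hX, Matrix.mul_assoc]
  have hsymm : (Xᵀ * (S - X * Xᵀ) * X)ᵀ = Xᵀ * (S - X * Xᵀ) * X := by
    simp [transpose_mul, hS, Matrix.mul_assoc]
  calc Xᵀ * X * D = (Xᵀ * X * D)ᵀ := by rw [← h, hsymm]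
    _ = D * (Xᵀ * X) := by rw [transpose_mul, hD, transpose_mul, transpose_transpose]

theorem Matrix.trace_mul_transpose_mul_mul_of_commute {n R : Type*} [Fintype n] [DecidableEq n]
    [CommRing R] {A D V : Matrix n n R} (hV : V * Vᵀ = 1) (hDV : Commute D V) :
    trace (D * (Vᵀ * A * V)) = trace (D * A) := by
  calc trace (D * (Vᵀ * A * V)) = trace (V * D * Vᵀ * A) := by
        rw [← Matrix.mul_assoc D, trace_mul_comm]
        simp only [Matrix.mul_assoc]
    _ = trace (D * A) := by rw [← hDV.eq, Matrix.mul_assoc D, hV, Matrix.mul_one]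

theorem stmt_3 (n r : ℕ) (S : Matrix (Fin n) (Fin n) ℝ) (hS : Sᵀ = S)
    (D : Matrix (Fin r) (Fin r) ℝ) (hD : ∀ i j, i ≠ j → D i j = 0)
    (X : Matrix (Fin n) (Fin r) ℝ) (hX : (S - X * Xᵀ) * X = X * D) :
    ∃ Y : Matrix (Fin n) (Fin r) ℝ,
      (∀ i j, i ≠ j → (Yᵀ * Y) i j = 0) ∧
      (S - Y * Yᵀ) * Y = Y * D ∧ Y * Yᵀ = X * Xᵀ ∧
      Matrix.trace (D * (Yᵀ * Y)) = Matrix.trace (D * (Xᵀ * X)) := by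
  obtain ⟨d, rfl⟩ : ∃ d, D = diagonal d :=
    ⟨D.diag, ((isDiag_iff_diagonal_diag D).1 fun i j => hD i j).symm⟩
  have hA : (Xᵀ * X).IsHermitian := by simpa using isHermitian_conjTranspose_mul_self X
  have hAd := commute_transpose_mul_self_of_sub_mul_eq hS (diagonal_transpose d) hX
  obtain ⟨V, μ, hVo, hVblock, hAV⟩ :=
    hA.exists_blockwise_orthogonal_mul_eq_mul_diagonal d (commute_diagonal_iff.1 hAd)
  have hVd : Commute (diagonal d) V := (commute_diagonal_iff.2 hVblock).symm
  have hVo' : V * Vᵀ = 1 := mul_eq_one_comm.1 hVo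
  have hgram : (X * V)ᵀ * (X * V) = Vᵀ * (Xᵀ * X) * V := by
    simp only [transpose_mul, Matrix.mul_assoc]
  have hYYt : X * V * (X * V)ᵀ = X * Xᵀ := by
    rw [transpose_mul, Matrix.mul_assoc, ← Matrix.mul_assoc V, hVo', Matrix.one_mul]
  refine ⟨X * V, fun i j hij => ?_, ?_, hYYt, ?_⟩
  · rw [hgram, mul_assoc, hAV, ← mul_assoc, hVo, one_mul]
    exact diagonal_apply_ne _ hij
  · rw [hYYt, ← Matrix.mul_assoc, hX, Matrix.mul_assoc, hVd.eq, ← Matrix.mul_assoc]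
  · rw [hgram, trace_mul_transpose_mul_mul_of_commute hVo' hVd]
end

section
/- Let X ∈ R^{n×r} satisfy SX = X(D + X^T X), where S is diagonal n×n, D is diagonal r×r, and X^T X is diagonal. Then there exists a scaled permutation matrix Y ∈ R^{n×r} satisfying SY = Y(D + Y^T Y), with Y^T Y = X^T X and ⟨S, YY^T⟩ = ⟨S, XX^T⟩. -/
open Matrix

theorem stmt_4 (n r : ℕ) (S : Matrix (Fin n) (Fin n) ℝ)
    (hS : ∀ i j, i ≠ j → S i j = 0)
    (D : Matrix (Fin r) (Fin r) ℝ) (hD : ∀ i j, i ≠ j → D i j = 0)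
    (X : Matrix (Fin n) (Fin r) ℝ)
    (hXtX : ∀ i j, i ≠ j → (Xᵀ * X) i j = 0)
    (hX : S * X = X * (D + Xᵀ * X)) :
    ∃ Y : Matrix (Fin n) (Fin r) ℝ,
      (∀ i j k, Y i j ≠ 0 → Y i k ≠ 0 → j = k) ∧
      (∀ i j k, Y i k ≠ 0 → Y j k ≠ 0 → i = j) ∧
      S * Y = Y * (D + Yᵀ * Y) ∧ Yᵀ * Y = Xᵀ * X ∧
      Matrix.trace (S * (Y * Yᵀ)) = Matrix.trace (S * (X * Xᵀ)) := by
  classical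
  set c : Fin r → ℝ := fun j => ∑ i, X i j * X i j with hc
  have hXtX_diag : ∀ j, (Xᵀ * X) j j = c j := by
    intro j
    simp [Matrix.mul_apply, hc, Matrix.transpose_apply]
  have hc_nonneg : ∀ j, 0 ≤ c j := fun j =>
    Finset.sum_nonneg fun i _ => mul_self_nonneg _
  -- eigenvalue relation
  have key : ∀ i j, X i j ≠ 0 → S i i = D j j + c j := by
    intro i j hij
    have h1 : (S * X) i j = S i i * X i j := by
      rw [Matrix.mul_apply]
      exact Finset.sum_eq_single i
        (fun k _ hk => by rw [hS i k (Ne.symm hk), zero_mul]) (by simp)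
    have h2 : (X * (D + Xᵀ * X)) i j = X i j * (D j j + c j) := by
      rw [Matrix.mul_apply]
      rw [Finset.sum_eq_single j
        (fun k _ hk => by
          rw [Matrix.add_apply, hD k j hk, hXtX k j hk, add_zero, mul_zero])
        (by simp)]
      rw [Matrix.add_apply, hXtX_diag]
    have h3 : S i i * X i j = X i j * (D j j + c j) := by
      rw [← h1, ← h2, hX]
    have h4 : S i i * X i j = (D j j + c j) * X i j := by rw [h3]; ring
    exact mul_right_cancel₀ hij h4
  -- orthogonality of columns
  have hOrth : ∀ j k : Fin r, j ≠ k → ∑ i, X i j * X i k = 0 := by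
    intro j k h
    have := hXtX j k h
    rwa [Matrix.mul_apply] at this
  -- trace lemma
  have traceLemma : ∀ Z : Matrix (Fin n) (Fin r) ℝ,
      (∀ i j, Z i j ≠ 0 → S i i = D j j + c j) →
      Matrix.trace (S * (Z * Zᵀ)) = ∑ j, (D j j + c j) * (∑ i, Z i j * Z i j) := by
    intro Z hZ
    have h1 : ∀ i, (S * (Z * Zᵀ)) i i = ∑ j, S i i * (Z i j * Z i j) := by
      intro i
      rw [Matrix.mul_apply]
      rw [Finset.sum_eq_single i
        (fun k _ hk => by rw [hS i k (Ne.symm hk), zero_mul]) (by simp)]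
      rw [Matrix.mul_apply, Finset.mul_sum]
      simp [Matrix.transpose_apply]
    rw [Matrix.trace]
    simp only [Matrix.diag, h1]
    rw [Finset.sum_comm]
    apply Finset.sum_congr rfl
    intro j _
    rw [Finset.mul_sum]
    apply Finset.sum_congr rfl
    intro i _
    by_cases hz : Z i j = 0
    · rw [hz]; ring
    · rw [hZ i j hz]
  -- Hall's theorem setup
  let T : {j : Fin r // c j ≠ 0} → Finset (Fin n) :=
    fun j => Finset.univ.filter (fun i => S i i = D j.1 j.1 + c j.1)
  have hall : ∀ A : Finset {j : Fin r // c j ≠ 0}, A.card ≤ (A.biUnion T).card := by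
    intro A
    set B := A.biUnion T with hB
    have hsupp : ∀ j : {j : Fin r // c j ≠ 0}, j ∈ A → ∀ i, i ∉ B → X i j.1 = 0 := by
      intro j hj i hiB
      by_contra hXi
      exact hiB (Finset.mem_biUnion.2 ⟨j, hj,
        Finset.mem_filter.2 ⟨Finset.mem_univ i, key i j.1 hXi⟩⟩)
    have hrestrict : ∀ j : {j : Fin r // c j ≠ 0}, j ∈ A → ∀ k : Fin r,
        (∑ i : ↥B, X i.1 k * X i.1 j.1) = ∑ i, X i k * X i j.1 := by
      intro j hj k
      rw [← Finset.sum_subtype B (fun x => Iff.rfl) (fun i => X i k * X i j.1)]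
      apply Finset.sum_subset (Finset.subset_univ B)
      intro i _ hiB
      rw [hsupp j hj i hiB, mul_zero]
    have li : LinearIndependent ℝ (fun (j : ↥A) (i : ↥B) => X i.1 j.1.1) := by
      rw [linearIndependent_iff']
      intro s g hsum j hjs
      have h0 : ∀ i : ↥B, (∑ j' ∈ s, g j' * X i.1 j'.1.1) = 0 := by
        intro i
        have := congrFun hsum i
        simpa [Finset.sum_apply] using this
      have h1 : (∑ j' ∈ s, g j' * ∑ i : ↥B, X i.1 j'.1.1 * X i.1 j.1.1) = 0 := by
        calc (∑ j' ∈ s, g j' * ∑ i : ↥B, X i.1 j'.1.1 * X i.1 j.1.1)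
            = ∑ j' ∈ s, ∑ i : ↥B, g j' * X i.1 j'.1.1 * X i.1 j.1.1 := by
              refine Finset.sum_congr rfl fun j' _ => ?_
              rw [Finset.mul_sum]
              exact Finset.sum_congr rfl fun i _ => by ring
          _ = ∑ i : ↥B, ∑ j' ∈ s, g j' * X i.1 j'.1.1 * X i.1 j.1.1 := Finset.sum_comm
          _ = ∑ i : ↥B, (∑ j' ∈ s, g j' * X i.1 j'.1.1) * X i.1 j.1.1 := by
              refine Finset.sum_congr rfl fun i _ => ?_
              rw [Finset.sum_mul]
          _ = 0 := by simp [h0]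
      have h2 : (∑ j' ∈ s, g j' * ∑ i : ↥B, X i.1 j'.1.1 * X i.1 j.1.1)
          = g j * c j.1.1 := by
        rw [Finset.sum_eq_single j]
        · rw [hrestrict j.1 j.2]
        · intro j' _ hj'
          have hne : j'.1.1 ≠ j.1.1 := by
            intro h
            exact hj' (Subtype.ext (Subtype.ext h))
          rw [hrestrict j.1 j.2, hOrth _ _ hne, mul_zero]
        · intro h; exact absurd hjs h
      have h3 : g j * c j.1.1 = 0 := by rw [← h2, h1]
      exact (mul_eq_zero.1 h3).resolve_right j.1.2
    have hcard := li.fintype_card_le_finrank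
    rwa [Module.finrank_pi, Fintype.card_coe, Fintype.card_coe] at hcard
  obtain ⟨f, hfinj, hfmem⟩ :=
    (Finset.all_card_le_biUnion_card_iff_exists_injective T).1 hall
  have hfS : ∀ j : {j : Fin r // c j ≠ 0}, S (f j) (f j) = D j.1 j.1 + c j.1 := by
    intro j
    have := hfmem j
    simpa [T] using this
  -- construct Y
  set Y : Matrix (Fin n) (Fin r) ℝ := fun i j =>
    if h : c j ≠ 0 then (if i = f ⟨j, h⟩ then Real.sqrt (c j) else 0) else 0 with hY
  have hYne : ∀ i j, Y i j ≠ 0 → ∃ h : c j ≠ 0, i = f ⟨j, h⟩ := by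
    intro i j hij
    rw [hY] at hij
    by_cases h : c j ≠ 0
    · refine ⟨h, ?_⟩
      by_contra hif
      simp [h, hif] at hij
    · simp [h] at hij
  have hYcolnorm : ∀ j, ∑ i, Y i j * Y i j = c j := by
    intro j
    by_cases h : c j ≠ 0
    · rw [Finset.sum_eq_single (f ⟨j, h⟩)]
      · simp [hY, h, Real.mul_self_sqrt (hc_nonneg j)]
      · intro i _ hi
        simp [hY, h, hi]
      · simp
    · push_neg at h
      simp [hY, h]
  have hYtY : Yᵀ * Y = Xᵀ * X := by
    ext j k
    by_cases hjk : j = k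
    · subst hjk
      rw [hXtX_diag, Matrix.mul_apply]
      simpa [Matrix.transpose_apply] using hYcolnorm j
    · rw [hXtX j k hjk, Matrix.mul_apply]
      apply Finset.sum_eq_zero
      intro i _
      simp only [Matrix.transpose_apply]
      by_cases h1 : Y i j = 0
      · rw [h1, zero_mul]
      by_cases h2 : Y i k = 0
      · rw [h2, mul_zero]
      obtain ⟨hj', hij⟩ := hYne i j h1
      obtain ⟨hk', hik⟩ := hYne i k h2
      exact absurd (Subtype.mk_eq_mk.mp (hfinj (hij.symm.trans hik))) hjk
  have hYkey : ∀ i j, Y i j ≠ 0 → S i i = D j j + c j := by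
    intro i j hij
    obtain ⟨h, hif⟩ := hYne i j hij
    rw [hif]
    exact hfS ⟨j, h⟩
  refine ⟨Y, ?_, ?_, ?_, hYtY, ?_⟩
  · -- row condition
    intro i j k hj hk
    obtain ⟨hj', hij⟩ := hYne i j hj
    obtain ⟨hk', hik⟩ := hYne i k hk
    exact Subtype.mk_eq_mk.mp (hfinj (hij.symm.trans hik))
  · -- column condition
    intro i j k hi hj
    obtain ⟨hk', hik⟩ := hYne i k hi
    obtain ⟨hk'', hjk⟩ := hYne j k hj
    rw [hik, hjk]
  · -- fixed point equation
    ext i j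
    have h1 : (S * Y) i j = S i i * Y i j := by
      rw [Matrix.mul_apply]
      exact Finset.sum_eq_single i
        (fun k _ hk => by rw [hS i k (Ne.symm hk), zero_mul]) (by simp)
    have h2 : (Y * (D + Yᵀ * Y)) i j = Y i j * (D j j + c j) := by
      rw [Matrix.mul_apply]
      rw [Finset.sum_eq_single j
        (fun k _ hk => by
          rw [Matrix.add_apply, hD k j hk, hYtY, hXtX k j hk, add_zero, mul_zero])
        (by simp)]
      rw [Matrix.add_apply, hYtY, hXtX_diag]
    rw [h1, h2]
    by_cases hz : Y i j = 0
    · rw [hz]; ring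
    · rw [hYkey i j hz]; ring
  · -- trace equality
    rw [traceLemma Y hYkey, traceLemma X key]
    apply Finset.sum_congr rfl
    intro j _
    rw [hYcolnorm j]
end

section
/- For X, Z ∈ R^{n×r}, define e = vec(XX^T − ZZ^T) and the Jacobian J ∈ R^{n²×nr} by J vec(Y) = vec(XY^T + YX^T). If J^† e = 0 (equivalently J^T e = 0), then either XX^T = ZZ^T or the smallest singular value σ_r(X) = 0. -/
open Matrix

lemma aux_trace_zero {m r : ℕ} (A : Matrix (Fin m) (Fin r) ℝ)
    (h : Matrix.trace (Aᵀ * A) = 0) : A = 0 := by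
  have h' : ∑ j, ∑ i, A i j * A i j = 0 := by
    simpa [Matrix.trace, Matrix.diag, Matrix.mul_apply] using h
  ext i j
  have h1 := (Finset.sum_eq_zero_iff_of_nonneg
    (fun j _ => Finset.sum_nonneg fun i _ => mul_self_nonneg (A i j))).1 h'
      j (Finset.mem_univ j)
  have h2 := (Finset.sum_eq_zero_iff_of_nonneg
    (fun i _ => mul_self_nonneg (A i j))).1 h1 i (Finset.mem_univ i)
  simpa using mul_self_eq_zero.1 h2

lemma aux_trace_formula {n r : ℕ} (X Y : Matrix (Fin n) (Fin r) ℝ)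
    (E : Matrix (Fin n) (Fin n) ℝ) (hE : Eᵀ = E) :
    Matrix.trace ((X * Yᵀ + Y * Xᵀ)ᵀ * E) = 2 * Matrix.trace (Yᵀ * (E * X)) := by
  rw [transpose_add, add_mul, trace_add]
  simp only [transpose_mul, transpose_transpose]
  have t1 : trace (Y * Xᵀ * E) = trace (Yᵀ * (E * X)) := by
    have e : (Y * Xᵀ * E)ᵀ = E * X * Yᵀ := by
      rw [transpose_mul, transpose_mul, transpose_transpose, hE, ← Matrix.mul_assoc]
    rw [← trace_transpose (Y * Xᵀ * E), e, trace_mul_comm]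
  have t2 : trace (X * Yᵀ * E) = trace (Yᵀ * (E * X)) := by
    rw [Matrix.mul_assoc, trace_mul_comm, Matrix.mul_assoc]
  rw [t1, t2]; ring

theorem stmt_5 (n r : ℕ) (X Z : Matrix (Fin n) (Fin r) ℝ)
    (h : ∀ Y : Matrix (Fin n) (Fin r) ℝ,
        Matrix.trace ((X * Yᵀ + Y * Xᵀ)ᵀ * (X * Xᵀ - Z * Zᵀ)) = 0) :
    X * Xᵀ = Z * Zᵀ ∨ X.rank < r := by
  by_cases hr : X.rank < r
  · exact Or.inr hr
  left
  set E : Matrix (Fin n) (Fin n) ℝ := X * Xᵀ - Z * Zᵀ with hEdef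
  clear_value E
  have hEs : Eᵀ = E := by
    simp [hEdef, transpose_sub]
  -- Step 1: E * X = 0
  have hEX : E * X = 0 := by
    apply aux_trace_zero
    have h0 := h (E * X)
    rw [aux_trace_formula X (E * X) E hEs] at h0
    linarith [h0]
  -- Step 2: Xᵀ * X is invertible
  have hrank : X.rank = r := le_antisymm X.rank_le_width (not_lt.1 hr)
  have hkerX : ∀ v : Fin r → ℝ, X *ᵥ v = 0 → v = 0 := by
    have h1 := LinearMap.finrank_range_add_finrank_ker X.mulVecLin
    rw [Matrix.rank] at hrank
    rw [hrank, Module.finrank_pi] at h1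
    simp only [Fintype.card_fin] at h1
    have hk0 : Module.finrank ℝ (LinearMap.ker X.mulVecLin) = 0 := by omega
    have hbot : LinearMap.ker X.mulVecLin = ⊥ :=
      Submodule.finrank_eq_zero.mp hk0
    intro v hv
    have hmem : v ∈ LinearMap.ker X.mulVecLin := by
      rw [LinearMap.mem_ker, Matrix.mulVecLin_apply]; exact hv
    rw [hbot] at hmem
    simpa using hmem
  have hGunit : IsUnit (Xᵀ * X) := by
    rw [← Matrix.mulVec_injective_iff_isUnit]
    intro v w hvw
    have hz : (Xᵀ * X) *ᵥ (v - w) = 0 := by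
      rw [Matrix.mulVec_sub, hvw, sub_self]
    have hXc : Xᴴ * X = Xᵀ * X := by
      rw [conjTranspose_eq_transpose_of_trivial]
    rw [← hXc, Matrix.conjTranspose_mul_self_mulVec_eq_zero] at hz
    exact sub_eq_zero.mp (hkerX _ hz)
  have hGdet : IsUnit (Xᵀ * X).det := (Matrix.isUnit_iff_isUnit_det _).mp hGunit
  set G : Matrix (Fin r) (Fin r) ℝ := Xᵀ * X with hGdef
  clear_value G
  have hGinv : G * G⁻¹ = 1 := Matrix.mul_nonsing_inv _ hGdet
  have hGinv' : G⁻¹ * G = 1 := Matrix.nonsing_inv_mul _ hGdet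
  -- left cancellation by X
  have cancel : ∀ A B : Matrix (Fin r) (Fin r) ℝ, X * A = X * B → A = B := by
    intro A B hAB
    have hLX : G⁻¹ * Xᵀ * X = 1 := by rw [Matrix.mul_assoc, ← hGdef, hGinv']
    have := congrArg (fun C => G⁻¹ * Xᵀ * C) hAB
    rwa [← Matrix.mul_assoc, ← Matrix.mul_assoc, hLX, Matrix.one_mul,
      Matrix.one_mul] at this
  -- Step 3: Z Zᵀ X = X G, hence X = Z * W
  have hZZX : Z * Zᵀ * X = X * G := by
    have h1 : X * Xᵀ * X - Z * Zᵀ * X = 0 := by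
      rw [← Matrix.sub_mul, ← hEdef, hEX]
    rw [sub_eq_zero] at h1
    rw [← h1, Matrix.mul_assoc, ← hGdef]
  set W : Matrix (Fin r) (Fin r) ℝ := Zᵀ * X * G⁻¹ with hWdef
  clear_value W
  have hXZW : X = Z * W := by
    rw [hWdef, ← Matrix.mul_assoc, ← Matrix.mul_assoc, hZZX, Matrix.mul_assoc,
      hGinv, Matrix.mul_one]
  set K : Matrix (Fin r) (Fin r) ℝ := G⁻¹ * (Xᵀ * Z) with hKdef
  clear_value K
  have hKW : K * W = 1 := by
    have e : K * W = G⁻¹ * (Xᵀ * (Z * W)) := by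
      rw [hKdef]; simp only [Matrix.mul_assoc]
    rw [e, ← hXZW, ← hGdef, hGinv']
  have hWK : W * K = 1 := mul_eq_one_comm.mp hKW
  -- Step 4: M := Z - X * K is zero
  set M : Matrix (Fin n) (Fin r) ℝ := Z - X * K with hMdef
  clear_value M
  have hXM : Xᵀ * M = 0 := by
    rw [hMdef, Matrix.mul_sub, ← Matrix.mul_assoc, ← hGdef, hKdef,
      ← Matrix.mul_assoc, hGinv, Matrix.one_mul, sub_self]
  have hMX : Mᵀ * X = 0 := by
    have := congrArg Matrix.transpose hXM
    rwa [transpose_mul, transpose_transpose, transpose_zero] at this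
  have hMZ : Mᵀ * Z = 0 := by
    have h1 : Mᵀ * (Z * W) = 0 := by rw [← hXZW]; exact hMX
    calc Mᵀ * Z = Mᵀ * Z * (W * K) := by rw [hWK, Matrix.mul_one]
      _ = Mᵀ * (Z * W) * K := by simp only [Matrix.mul_assoc]
      _ = 0 := by rw [h1, Matrix.zero_mul]
  have hM0 : M = 0 := by
    have hMM : Mᵀ * M = 0 := by
      calc Mᵀ * M = Mᵀ * (Z - X * K) := by rw [← hMdef]
        _ = Mᵀ * Z - Mᵀ * X * K := by rw [Matrix.mul_sub, ← Matrix.mul_assoc]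
        _ = 0 := by rw [hMZ, hMX, Matrix.zero_mul, sub_self]
    have hc : Mᴴ * M = 0 := by
      rwa [conjTranspose_eq_transpose_of_trivial]
    exact Matrix.conjTranspose_mul_self_eq_zero.mp hc
  have hZXK : Z = X * K := by
    have h1 := hM0
    rw [hMdef, sub_eq_zero] at h1
    exact h1
  -- Step 5: K * Kᵀ = 1 and conclude
  have hKKt : K * Kᵀ = 1 := by
    have h1 : X * (K * (Kᵀ * G)) = X * G := by
      rw [← hZZX, hZXK, transpose_mul, hGdef]
      simp only [Matrix.mul_assoc]
    have h2 : K * (Kᵀ * G) = G := cancel _ _ h1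
    have h3 := congrArg (fun A => A * G⁻¹) h2
    rwa [Matrix.mul_assoc, Matrix.mul_assoc, hGinv, Matrix.mul_one] at h3
  rw [hZXK, transpose_mul]
  rw [← Matrix.mul_assoc, Matrix.mul_assoc X K Kᵀ, hKKt, Matrix.mul_one]
end

section
/- Given 0 ≤ α ≤ 1 and β > 0, define ψ(α,β,t) = (t/β)α + √(1−(t/β)²)·√(1−α²) for t/β ≤ α, and ψ(α,β,t) = 1 for t/β > α. Then max over t ≥ 0 of (ψ(α,β,t) − t)/(1 + t) equals √(1−α²) if β ≥ α/(1+√(1−α²)), and equals (1 − 2αβ + β²)/(1 − β²) if β < α/(1+√(1−α²)). -/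
set_option maxHeartbeats 1000000

theorem stmt_8 (α β : ℝ) (hα0 : 0 ≤ α) (hα1 : α ≤ 1) (hβ : 0 < β) :
    IsGreatest {v : ℝ | ∃ t : ℝ, 0 ≤ t ∧
        v = ((if t / β ≤ α then (t / β) * α
              + Real.sqrt (1 - (t / β) ^ 2) * Real.sqrt (1 - α ^ 2)
             else 1) - t) / (1 + t)}
      (if α / (1 + Real.sqrt (1 - α ^ 2)) ≤ β then Real.sqrt (1 - α ^ 2)
       else (1 - 2 * α * β + β ^ 2) / (1 - β ^ 2)) := by
  set c := Real.sqrt (1 - α ^ 2) with hcdef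
  have hc0 : 0 ≤ c := Real.sqrt_nonneg _
  have hc2 : c ^ 2 = 1 - α ^ 2 := Real.sq_sqrt (by nlinarith)
  have hc1 : c ≤ 1 := by nlinarith
  by_cases hcase : α / (1 + c) ≤ β
  · rw [if_pos hcase]
    have hαβ : α ≤ β * (1 + c) := by
      rw [div_le_iff₀ (by positivity)] at hcase; linarith
    constructor
    · exact ⟨0, le_refl 0, by
        rw [if_pos (by simpa using hα0)]
        simp⟩
    · rintro v ⟨t, ht, rfl⟩
      obtain ⟨s, hs0, rfl⟩ : ∃ s, 0 ≤ s ∧ t = β * s :=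
        ⟨t / β, div_nonneg ht hβ.le, by field_simp⟩
      rw [mul_div_cancel_left₀ _ hβ.ne']
      rw [div_le_iff₀ (by positivity)]
      split_ifs with h
      · have hq1 : Real.sqrt (1 - s ^ 2) ≤ 1 := Real.sqrt_le_one.mpr (by nlinarith)
        have hq0 : 0 ≤ Real.sqrt (1 - s ^ 2) := Real.sqrt_nonneg _
        nlinarith [mul_nonneg hs0 (sub_nonneg.2 hαβ),
          mul_le_mul_of_nonneg_right hq1 hc0]
      · push_neg at h
        have h1 : α * α ≤ α * (β * (1 + c)) :=
          mul_le_mul_of_nonneg_left hαβ hα0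
        have h2 : α * (β * (1 + c)) ≤ s * (β * (1 + c)) :=
          mul_le_mul_of_nonneg_right h.le (by positivity)
        nlinarith
  · rw [if_neg hcase]
    push_neg at hcase
    have hβα : β * (1 + c) < α := (lt_div_iff₀ (by positivity)).mp hcase
    have hα0' : 0 < α := lt_of_le_of_lt (by positivity) hβα
    have hβ1 : β < 1 := by nlinarith
    have hD : 0 < 1 - β ^ 2 := by nlinarith
    have hMnum : 0 < 1 - 2 * α * β + β ^ 2 := by nlinarith
    set M := (1 - 2 * α * β + β ^ 2) / (1 - β ^ 2) with hMdef
    set K := (α * (1 + β ^ 2) - 2 * β) / (1 - β ^ 2) with hKdef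
    have hM : 0 < M := div_pos hMnum hD
    have hDne : (1 : ℝ) - β ^ 2 ≠ 0 := hD.ne'
    have hMD : M * (1 - β ^ 2) = 1 - 2 * α * β + β ^ 2 := by
      rw [hMdef]; field_simp
    have hKD : K * (1 - β ^ 2) = α * (1 + β ^ 2) - 2 * β := by
      rw [hKdef]; field_simp
    have hKnum : 0 < α * (1 + β ^ 2) - 2 * β := by
      have hab : α * β < 1 - c := by nlinarith
      nlinarith [mul_pos (by nlinarith : (0:ℝ) < 1 - c - α * β)
        (by nlinarith : (0:ℝ) < 1 + c - α * β)]
    have hK : 0 < K := div_pos hKnum hD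
    have hid : c ^ 2 + K ^ 2 = M ^ 2 := by
      have h : (c ^ 2 + K ^ 2 - M ^ 2) * (1 - β ^ 2) ^ 2 = 0 := by
        linear_combination ((1 - β ^ 2) ^ 2) * hc2
          + (K * (1 - β ^ 2) + (α * (1 + β ^ 2) - 2 * β)) * hKD
          - (M * (1 - β ^ 2) + (1 - 2 * α * β + β ^ 2)) * hMD
      have h2 := (mul_eq_zero.mp h).resolve_right (pow_ne_zero 2 hDne)
      linarith
    have hKM : K = α - β * (1 + M) := by
      have h : (K - (α - β * (1 + M))) * (1 - β ^ 2) = 0 := by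
        linear_combination hKD + β * hMD
      have h2 := (mul_eq_zero.mp h).resolve_right hDne
      linarith
    clear_value M K
    have hKM0 : 0 ≤ K / M := (div_pos hK hM).le
    constructor
    · refine ⟨β * (K / M), mul_nonneg hβ.le hKM0, ?_⟩
      rw [mul_div_cancel_left₀ _ hβ.ne']
      have hKαM : K / M ≤ α := by
        rw [div_le_iff₀ hM]
        nlinarith [hMD, hKD]
      rw [if_pos hKαM]
      have hs2 : 1 - (K / M) ^ 2 = (c / M) ^ 2 := by
        field_simp
        linear_combination -hid
      rw [hs2, Real.sqrt_sq (div_nonneg hc0 hM.le)]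
      have hcc : c / M * c = (1 - α ^ 2) / M := by
        rw [div_mul_eq_mul_div, ← sq, hc2]
      rw [hcc]
      rw [eq_div_iff (by nlinarith [mul_pos hβ (div_pos hK hM)])]
      field_simp
      linear_combination -hid + hc2 + K * hKM
    · rintro v ⟨t, ht, rfl⟩
      obtain ⟨s, hs0, rfl⟩ : ∃ s, 0 ≤ s ∧ t = β * s :=
        ⟨t / β, div_nonneg ht hβ.le, by field_simp⟩
      rw [mul_div_cancel_left₀ _ hβ.ne']
      rw [div_le_iff₀ (by positivity)]
      split_ifs with h
      · set q := Real.sqrt (1 - s ^ 2) with hqdef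
        have hq0 : 0 ≤ q := Real.sqrt_nonneg _
        have hq2 : q ^ 2 = 1 - s ^ 2 := Real.sq_sqrt (by nlinarith)
        have cauchy : q * c + K * s ≤ M := by
          nlinarith [sq_nonneg (c * s - K * q), mul_nonneg (mul_nonneg hq0 hc0) hs0,
            mul_nonneg hq0 hc0, mul_nonneg hK.le hs0]
        have hαs : s * α = s * K + s * (β * (1 + M)) := by
          rw [hKM]; ring
        nlinarith [cauchy, hαs]
      · push_neg at h
        have h1 : c ^ 2 + K * α ≤ M := by
          nlinarith [sq_nonneg (c * (α - K)), sq_nonneg c,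
            mul_nonneg hK.le hα0'.le]
        have hαsq : α * α = K * α + α * (β * (1 + M)) := by
          rw [hKM]; ring
        have h2 : α * (β * (1 + M)) ≤ s * (β * (1 + M)) :=
          mul_le_mul_of_nonneg_right h.le (by positivity)
        nlinarith
end

section
/- Let t = r*/r with 1 ≤ r* ≤ r. Consider real α, β ≥ 0 and define γ(α,β) = √(1−α²) if β ≥ α/(1+√(1−α²)), and γ(α,β) = (1−2αβ+β²)/(1−β²) otherwise. Suppose the pair (α,β) satisfies: (i) if β ≤ α then α² + (r/r*)β² ≤ 1, and (ii) if β ≥ α then α ≤ 1/√(1+r/r*). Then γ(α,β) ≥ 1/(1+√(r*/r)). -/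
set_option maxHeartbeats 2000000 in
theorem stmt_10 (r rstar : ℕ) (h1 : 1 ≤ rstar) (h2 : rstar ≤ r) (α β : ℝ)
    (hα : 0 ≤ α) (hβ : 0 ≤ β)
    (hi : β ≤ α → α ^ 2 + ((r : ℝ) / (rstar : ℝ)) * β ^ 2 ≤ 1)
    (hii : α ≤ β → α ≤ 1 / Real.sqrt (1 + (r : ℝ) / (rstar : ℝ))) :
    1 / (1 + Real.sqrt ((rstar : ℝ) / (r : ℝ))) ≤
      (if α / (1 + Real.sqrt (1 - α ^ 2)) ≤ β then Real.sqrt (1 - α ^ 2)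
       else (1 - 2 * α * β + β ^ 2) / (1 - β ^ 2)) := by
  have hr0 : (0:ℝ) < (r:ℝ) := by exact_mod_cast (by omega : 0 < r)
  have hrs0 : (0:ℝ) < (rstar:ℝ) := by exact_mod_cast (by omega : 0 < rstar)
  set t : ℝ := (rstar:ℝ) / (r:ℝ) with ht
  have ht0 : 0 < t := div_pos hrs0 hr0
  have ht1 : t ≤ 1 := by
    rw [ht, div_le_one hr0]; exact_mod_cast h2
  have hq : (r:ℝ) / (rstar:ℝ) = t⁻¹ := by
    rw [ht]; field_simp
  rw [hq] at hi hii
  clear_value t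
  clear ht
  set s : ℝ := Real.sqrt t with hsdef
  have hs2 : s ^ 2 = t := Real.sq_sqrt ht0.le
  have hs0 : 0 < s := Real.sqrt_pos.mpr ht0
  have hs1 : s ≤ 1 := by
    rw [hsdef, show (1:ℝ) = Real.sqrt 1 by simp]
    exact Real.sqrt_le_sqrt ht1
  clear_value s
  clear hsdef
  have hs1' : (0:ℝ) < 1 + s := by linarith
  set c : ℝ := Real.sqrt (1 - α ^ 2) with hcdef
  have hc0 : 0 ≤ c := Real.sqrt_nonneg _
  have hc1 : c ≤ 1 := by
    rw [hcdef]
    exact Real.sqrt_le_one.mpr (by nlinarith)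
  have hcsq : α ≤ 1 → c ^ 2 = 1 - α ^ 2 := fun h => Real.sq_sqrt (by nlinarith)
  clear_value c
  split_ifs with hcase
  · -- γ = c = √(1-α²); need 1/(1+s) ≤ c
    rcases le_total α β with hab | hba
    · -- α ≤ β : α ≤ 1/√(1+1/t)
      have hx := hii hab
      have h1t : (0:ℝ) < 1 + t⁻¹ := by positivity
      have hsq : Real.sqrt (1 + t⁻¹) ^ 2 = 1 + t⁻¹ := Real.sq_sqrt h1t.le
      have hsqpos : 0 < Real.sqrt (1 + t⁻¹) := Real.sqrt_pos.mpr h1t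
      have hα2 : α ^ 2 ≤ t / (1 + t) := by
        have h3 : α ^ 2 ≤ (1 / Real.sqrt (1 + t⁻¹)) ^ 2 := by
          apply pow_le_pow_left₀ hα hx
        rw [div_pow, one_pow, hsq] at h3
        have h4 : (1:ℝ) / (1 + t⁻¹) = t / (1 + t) := by
          rw [div_eq_div_iff (ne_of_gt h1t) (ne_of_gt (by linarith : (0:ℝ) < 1 + t)),
            one_mul, mul_add, mul_one, mul_inv_cancel₀ ht0.ne']
          ring
        rw [h4] at h3; exact h3
      have h1a : 1 / (1 + t) ≤ 1 - α ^ 2 := by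
        have h5 : t / (1 + t) + 1 / (1 + t) = 1 := by
          field_simp
          ring
        linarith
      have hkey : 1 / (1 + s) ≤ Real.sqrt (1 / (1 + t)) := by
        have h6 : Real.sqrt (1 + t) ≤ 1 + s := by
          rw [show (1:ℝ) + s = Real.sqrt ((1 + s) ^ 2) by rw [Real.sqrt_sq hs1'.le]]
          exact Real.sqrt_le_sqrt (by nlinarith)
        have h7 : Real.sqrt (1 / (1 + t)) = 1 / Real.sqrt (1 + t) := by
          rw [one_div, one_div, Real.sqrt_inv]
        rw [h7]
        exact one_div_le_one_div_of_le (Real.sqrt_pos.mpr (by linarith)) h6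
      calc 1 / (1 + s) ≤ Real.sqrt (1 / (1 + t)) := hkey
        _ ≤ c := hcdef ▸ Real.sqrt_le_sqrt h1a
    · -- β ≤ α
      have hx := hi hba
      have hti : (0:ℝ) < t⁻¹ := inv_pos.mpr ht0
      have hα1 : α ≤ 1 := by
        nlinarith [mul_nonneg hti.le (sq_nonneg β), sq_nonneg (α - 1)]
      have hc2 : c ^ 2 = 1 - α ^ 2 := hcsq hα1
      have hβ' : α ≤ β * (1 + c) := by
        rw [div_le_iff₀ (by linarith : (0:ℝ) < 1 + c)] at hcase; linarith
      have hβ2 : β ^ 2 ≤ t * c ^ 2 := by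
        have h6 : t⁻¹ * β ^ 2 ≤ c ^ 2 := by linarith [hc2]
        have h7 := mul_le_mul_of_nonneg_left h6 ht0.le
        rw [← mul_assoc, mul_inv_cancel₀ ht0.ne', one_mul] at h7
        exact h7
      have hα2 : α ^ 2 ≤ t * c ^ 2 * (1 + c) ^ 2 := by
        have h8 : α ^ 2 ≤ (β * (1 + c)) ^ 2 := by
          apply pow_le_pow_left₀ hα hβ'
        nlinarith [sq_nonneg (1 + c)]
      have hmain : 1 - c ≤ s ^ 2 * c ^ 2 * (1 + c) := by
        rw [hs2]
        have h9 : (1 - c) * (1 + c) ≤ t * c ^ 2 * (1 + c) * (1 + c) := by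
          nlinarith [hc2]
        nlinarith [mul_nonneg (mul_nonneg ht0.le (sq_nonneg c)) hc0]
      by_contra hcon
      push_neg at hcon
      have hc' : c * (1 + s) < 1 := by
        rw [lt_div_iff₀ hs1'] at hcon; linarith
      clear hcon hα2 hβ2 hβ' hc2 hx hi hii hq hcase hcdef
      have hsc : s * c < 1 := by nlinarith
      have hscc : s ^ 2 * c ^ 2 < s * c := by nlinarith [mul_nonneg hs0.le hc0]
      nlinarith [mul_nonneg hs0.le hc0, mul_nonneg (mul_nonneg hs0.le hc0) hc0]
  · -- γ = (1 - 2αβ + β²)/(1 - β²)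
    push_neg at hcase
    have hβα : β < α := by
      have h10 : α / (1 + c) ≤ α := by
        apply div_le_self hα; linarith
      linarith
    have hx := hi hβα.le
    have hti : (0:ℝ) < t⁻¹ := inv_pos.mpr ht0
    have hα1 : α ≤ 1 := by
      nlinarith [mul_nonneg hti.le (sq_nonneg β), sq_nonneg (α - 1)]
    have hcon : s ^ 2 * α ^ 2 + β ^ 2 ≤ s ^ 2 := by
      rw [hs2]
      have h11 := mul_le_mul_of_nonneg_left hx ht0.le
      have h12 : t * (t⁻¹ * β ^ 2) = β ^ 2 := by
        rw [← mul_assoc, mul_inv_cancel₀ ht0.ne', one_mul]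
      nlinarith
    have hβ1 : β < 1 := by
      by_contra hb
      push_neg at hb
      have : α ≤ β := le_trans hα1 hb
      linarith
    have hb2 : (0:ℝ) < 1 - β ^ 2 := by nlinarith
    rw [div_le_div_iff₀ hs1' hb2]
    have hcon' : 0 ≤ s ^ 2 - s ^ 2 * α ^ 2 - β ^ 2 := by linarith
    clear hi hii hq hx hcase hcdef hcsq
    have hL0 : (0:ℝ) < s + (2 + s) * β ^ 2 := by positivity
    have hsq2 : (2 * s * (1 + s) * α * β) ^ 2 ≤ (s * (s + (2 + s) * β ^ 2)) ^ 2 := by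
      nlinarith [sq_nonneg ((s^2 + 2*s + 2) * β^2 - s^2),
        mul_nonneg (mul_nonneg (sq_nonneg (1 + s)) (sq_nonneg β)) hcon']
    have hXn : (0:ℝ) ≤ 2 * s * (1 + s) * α * β := by positivity
    have hstep : 2 * s * (1 + s) * α * β ≤ s * (s + (2 + s) * β ^ 2) := by
      nlinarith [hsq2, hXn, mul_pos hs0 hL0]
    nlinarith [hstep, hs0]
end

section
/- For real numbers α, β with 0 ≤ α ≤ 1, 0 ≤ β < 1, and t > 0 such that α² + t^{-1}β² ≤ 1, one has (1 − 2αβ + β²)/(1 − β²) ≥ 1/(1 + √t), and the bound 1/(1+√t) is attained: min over α,β of (1−2αβ+β²)/(1−β²) subject to α² + t^{-1}β² ≤ 1 equals 1/(1+√t). -/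
/-!
Write `t = s²` with `s > 0`. Clearing denominators, the bound becomes
`s - 2(1+s)αβ + (2+s)β² ≥ 0`, and `s` times the left side equals
`(sα - (1+s)β)² + (s² - s²α² - β²)`, a sum of a square and the slack of the ellipse constraint.
Equality in both terms forces `(α, β) = (1+s, s)/√((1+s)² + 1)`, where the ratio is `1/(1+s)`.
-/

lemma add_div_le_one_iff {t a b : ℝ} (ht : 0 < t) : a + b / t ≤ 1 ↔ t * a + b ≤ t := by
  rw [← le_sub_iff_add_le', div_le_iff₀ ht]
  constructor <;> intro h <;> linarith

lemma one_div_one_add_le_of_sq_mul_add_sq_le {s α β : ℝ} (hs : 0 < s) (hβ : β ^ 2 < 1)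
    (h : s ^ 2 * α ^ 2 + β ^ 2 ≤ s ^ 2) :
    1 / (1 + s) ≤ (1 - 2 * α * β + β ^ 2) / (1 - β ^ 2) := by
  rw [div_le_div_iff₀ (by positivity) (by linarith)]
  have key : s * ((1 - 2 * α * β + β ^ 2) * (1 + s) - 1 * (1 - β ^ 2)) =
      (s * α - (1 + s) * β) ^ 2 + (s ^ 2 - s ^ 2 * α ^ 2 - β ^ 2) := by ring
  have : 0 ≤ s * ((1 - 2 * α * β + β ^ 2) * (1 + s) - 1 * (1 - β ^ 2)) := by
    rw [key]; nlinarith [sq_nonneg (s * α - (1 + s) * β)]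
  linarith [(mul_nonneg_iff_of_pos_left hs).mp this]

lemma exists_sq_mul_add_sq_eq_and_eq_one_div_one_add {s : ℝ} (hs : 0 < s) :
    ∃ α β : ℝ, 0 ≤ α ∧ α ≤ 1 ∧ 0 ≤ β ∧ β < 1 ∧ s ^ 2 * α ^ 2 + β ^ 2 = s ^ 2 ∧
      (1 - 2 * α * β + β ^ 2) / (1 - β ^ 2) = 1 / (1 + s) := by
  set r := √((1 + s) ^ 2 + 1)
  have hr2 : r ^ 2 = (1 + s) ^ 2 + 1 := Real.sq_sqrt (by positivity)
  have hsr : 1 + s < r := Real.lt_sqrt_of_sq_lt (by linarith)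
  have hr : 0 < r := by linarith
  refine ⟨(1 + s) / r, s / r, by positivity, ?_, by positivity, ?_, ?_, ?_⟩
  · rw [div_le_one hr]; exact hsr.le
  · rw [div_lt_one hr]; linarith
  · field_simp
    linear_combination -hr2
  · have hden : r ^ 2 - s ^ 2 ≠ 0 := by rw [hr2]; nlinarith
    rw [div_eq_div_iff (by field_simp; exact div_ne_zero hden (by positivity)) (by positivity)]
    field_simp
    linear_combination s * hr2

theorem stmt_11 (t : ℝ) (ht : 0 < t) :
    (∀ α β : ℝ, 0 ≤ α → α ≤ 1 → 0 ≤ β → β < 1 → α ^ 2 + β ^ 2 / t ≤ 1 →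
        1 / (1 + Real.sqrt t) ≤ (1 - 2 * α * β + β ^ 2) / (1 - β ^ 2)) ∧
    IsLeast {v : ℝ | ∃ α β : ℝ, 0 ≤ α ∧ α ≤ 1 ∧ 0 ≤ β ∧ β < 1 ∧
        α ^ 2 + β ^ 2 / t ≤ 1 ∧ v = (1 - 2 * α * β + β ^ 2) / (1 - β ^ 2)}
      (1 / (1 + Real.sqrt t)) := by
  obtain ⟨s, hs, rfl⟩ : ∃ s, 0 < s ∧ t = s ^ 2 :=
    ⟨√t, Real.sqrt_pos.2 ht, (Real.sq_sqrt ht.le).symm⟩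
  simp only [Real.sqrt_sq hs.le, add_div_le_one_iff ht]
  have lower : ∀ α β : ℝ, 0 ≤ α → α ≤ 1 → 0 ≤ β → β < 1 → s ^ 2 * α ^ 2 + β ^ 2 ≤ s ^ 2 →
      1 / (1 + s) ≤ (1 - 2 * α * β + β ^ 2) / (1 - β ^ 2) :=
    fun α β _ _ hβ₀ hβ₁ h => one_div_one_add_le_of_sq_mul_add_sq_le hs (by nlinarith) h
  refine ⟨lower, ?_, ?_⟩
  · obtain ⟨α, β, hα₀, hα₁, hβ₀, hβ₁, hcon, hval⟩ :=
      exists_sq_mul_add_sq_eq_and_eq_one_div_one_add hs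
    exact ⟨α, β, hα₀, hα₁, hβ₀, hβ₁, hcon.le, hval.symm⟩
  · rintro v ⟨α, β, hα₀, hα₁, hβ₀, hβ₁, hcon, rfl⟩
    exact lower α β hα₀ hα₁ hβ₀ hβ₁ hcon
end

section
/- Let e ∈ R^N be nonzero, J ∈ R^{N×k} a matrix with J^T e ≠ 0, and w ∈ R^N fixed. Then max over y ∈ R^k of e^T(Jy − w) subject to ‖e‖·‖Jy − w‖ = 1 equals √(1 − α²)·√(1 − ‖e‖²‖(I − JJ^†)w‖²) − e^T(I − JJ^†)w, where α² = 1 − ‖JJ^† e‖²/‖e‖². -/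
open Matrix

private lemma dps_nonneg {n : ℕ} (a : Fin n → ℝ) : 0 ≤ a ⬝ᵥ a :=
  Finset.sum_nonneg fun i _ => mul_self_nonneg _

private lemma cs_dot {n : ℕ} (a b : Fin n → ℝ) :
    a ⬝ᵥ b ≤ Real.sqrt (a ⬝ᵥ a) * Real.sqrt (b ⬝ᵥ b) := by
  have h := Finset.sum_mul_sq_le_sq_mul_sq Finset.univ a b
  have h2 : (a ⬝ᵥ b) ^ 2 ≤ (a ⬝ᵥ a) * (b ⬝ᵥ b) := by
    simpa [dotProduct, sq] using h
  calc a ⬝ᵥ b ≤ |a ⬝ᵥ b| := le_abs_self _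
    _ = Real.sqrt ((a ⬝ᵥ b) ^ 2) := (Real.sqrt_sq_eq_abs _).symm
    _ ≤ Real.sqrt ((a ⬝ᵥ a) * (b ⬝ᵥ b)) := Real.sqrt_le_sqrt h2
    _ = _ := Real.sqrt_mul (dps_nonneg a) _

theorem stmt_13 (N k : ℕ) (e w : Fin N → ℝ) (he : e ≠ 0)
    (J : Matrix (Fin N) (Fin k) ℝ) (hJe : Jᵀ *ᵥ e ≠ 0)
    (Jd : Matrix (Fin k) (Fin N) ℝ)
    (h1 : J * Jd * J = J) (h2 : Jd * J * Jd = Jd)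
    (h3 : (J * Jd)ᵀ = J * Jd) (h4 : (Jd * J)ᵀ = Jd * J)
    (hfeas : Real.sqrt (e ⬝ᵥ e) *
        Real.sqrt ((w - (J * Jd) *ᵥ w) ⬝ᵥ (w - (J * Jd) *ᵥ w)) ≤ 1) :
    IsGreatest {v : ℝ | ∃ y : Fin k → ℝ,
        Real.sqrt (e ⬝ᵥ e) * Real.sqrt ((J *ᵥ y - w) ⬝ᵥ (J *ᵥ y - w)) = 1 ∧
        v = e ⬝ᵥ (J *ᵥ y - w)}
      (Real.sqrt (1 - (1 - ((J * Jd) *ᵥ e) ⬝ᵥ ((J * Jd) *ᵥ e) / (e ⬝ᵥ e))) *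
        Real.sqrt (1 - (e ⬝ᵥ e) * ((w - (J * Jd) *ᵥ w) ⬝ᵥ (w - (J * Jd) *ᵥ w)))
        - e ⬝ᵥ (w - (J * Jd) *ᵥ w)) := by
  set E := e ⬝ᵥ e with hEdef
  set q : Fin N → ℝ := w - (J * Jd) *ᵥ w with hqdef
  set p : Fin N → ℝ := (J * Jd) *ᵥ e with hpdef
  set Q := q ⬝ᵥ q with hQdef
  have hE : 0 < E := by
    rcases lt_or_eq_of_le (dps_nonneg e) with h | h
    · exact h
    · exact absurd (dotProduct_self_eq_zero.mp h.symm) he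
  have hPP : (J * Jd) * (J * Jd) = J * Jd := by
    have : J * Jd * J * Jd = J * Jd := by rw [h1]
    simpa [Matrix.mul_assoc] using this
  have hsym : ∀ a b : Fin N → ℝ, ((J * Jd) *ᵥ a) ⬝ᵥ b = a ⬝ᵥ ((J * Jd) *ᵥ b) := by
    intro a b
    conv_rhs => rw [dotProduct_mulVec, ← mulVec_transpose, h3]
  have hPq : (J * Jd) *ᵥ q = 0 := by
    rw [hqdef, Matrix.mulVec_sub, mulVec_mulVec, hPP, sub_self]
  have hpq : p ⬝ᵥ q = 0 := by rw [hpdef, hsym, hPq, dotProduct_zero]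
  have hPp : (J * Jd) *ᵥ p = p := by rw [hpdef, mulVec_mulVec, hPP]
  have hep : e ⬝ᵥ p = p ⬝ᵥ p := by
    conv_rhs => rw [hpdef, hsym, ← hpdef, hPp]
  have hJP : Jᵀ * (J * Jd) = Jᵀ := by rw [← h3, ← Matrix.transpose_mul, h1]
  have hp0 : p ≠ 0 := by
    intro h
    apply hJe
    have : Jᵀ *ᵥ p = Jᵀ *ᵥ e := by rw [hpdef, mulVec_mulVec, hJP]
    rw [← this, h, Matrix.mulVec_zero]
  have hpp : 0 < p ⬝ᵥ p := by
    rcases lt_or_eq_of_le (dps_nonneg p) with h | h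
    · exact h
    · exact absurd (dotProduct_self_eq_zero.mp h.symm) hp0
  have hQ0 : 0 ≤ Q := dps_nonneg q
  have hEQ : E * Q ≤ 1 := by
    have h' : Real.sqrt E * Real.sqrt Q * (Real.sqrt E * Real.sqrt Q) ≤ 1 :=
      mul_le_one₀ hfeas (by positivity) hfeas
    calc E * Q = Real.sqrt E * Real.sqrt Q * (Real.sqrt E * Real.sqrt Q) := by
          rw [mul_mul_mul_comm, Real.mul_self_sqrt hE.le, Real.mul_self_sqrt hQ0]
      _ ≤ 1 := h'
  have hIQ : 0 ≤ 1 / E - Q := by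
    rw [sub_nonneg, le_div_iff₀ hE, mul_comm]
    exact hEQ
  -- the target value, rewritten
  have htarget :
      Real.sqrt (1 - (1 - p ⬝ᵥ p / E)) * Real.sqrt (1 - E * Q)
        = Real.sqrt (p ⬝ᵥ p) * Real.sqrt (1 / E - Q) := by
    rw [show (1 - (1 - p ⬝ᵥ p / E)) = p ⬝ᵥ p / E by ring]
    rw [← Real.sqrt_mul (by positivity), ← Real.sqrt_mul hpp.le]
    congr 1
    field_simp
  constructor
  · -- membership: witness
    set t := Real.sqrt (1 / E - Q) / Real.sqrt (p ⬝ᵥ p) with htdef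
    refine ⟨t • (Jd *ᵥ e) + Jd *ᵥ w, ?_, ?_⟩
    all_goals
      have hJy : J *ᵥ (t • (Jd *ᵥ e) + Jd *ᵥ w) - w = t • p - q := by
        rw [Matrix.mulVec_add, Matrix.mulVec_smul, mulVec_mulVec, mulVec_mulVec,
          ← hpdef, hqdef]
        abel
    · rw [hJy]
      have hnorm : (t • p - q) ⬝ᵥ (t • p - q) = 1 / E := by
        have expand : (t • p - q) ⬝ᵥ (t • p - q)
            = t * t * (p ⬝ᵥ p) - 2 * t * (p ⬝ᵥ q) + Q := by
          simp only [sub_dotProduct, dotProduct_sub, smul_dotProduct, dotProduct_smul,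
            smul_eq_mul, hQdef]
          rw [dotProduct_comm q p]
          ring
        have hsp : Real.sqrt (p ⬝ᵥ p) ≠ 0 := by positivity
        have ht2 : t * t * (p ⬝ᵥ p) = 1 / E - Q := by
          have : t * t * (p ⬝ᵥ p) = (Real.sqrt (1 / E - Q) * Real.sqrt (1 / E - Q)) *
              ((p ⬝ᵥ p) / (Real.sqrt (p ⬝ᵥ p) * Real.sqrt (p ⬝ᵥ p))) := by
            rw [htdef]; ring
          rw [this, Real.mul_self_sqrt hIQ, Real.mul_self_sqrt hpp.le, div_self hpp.ne',
            mul_one]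
        rw [expand, hpq, ht2]
        ring
      rw [hnorm, ← Real.sqrt_mul hE.le, mul_one_div, div_self hE.ne', Real.sqrt_one]
    · rw [hJy, htarget]
      have hsp : Real.sqrt (p ⬝ᵥ p) ≠ 0 := by positivity
      have hval : e ⬝ᵥ (t • p - q) = t * (p ⬝ᵥ p) - e ⬝ᵥ q := by
        rw [dotProduct_sub, dotProduct_smul, smul_eq_mul, hep]
      rw [hval, htdef]
      have : Real.sqrt (1 / E - Q) / Real.sqrt (p ⬝ᵥ p) * (p ⬝ᵥ p)
          = Real.sqrt (p ⬝ᵥ p) * Real.sqrt (1 / E - Q) := by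
        rw [eq_comm, mul_comm, div_mul_eq_mul_div, eq_comm, div_eq_iff hsp,
          mul_assoc, Real.mul_self_sqrt hpp.le]
      rw [this]
  · -- upper bound
    rintro v ⟨y, hcon, hv⟩
    set u : Fin N → ℝ := J *ᵥ y - w with hudef
    set z : Fin N → ℝ := u + q with hzdef
    have hzu : z = J *ᵥ y - (J * Jd) *ᵥ w := by rw [hzdef, hudef, hqdef]; abel
    have hPz : (J * Jd) *ᵥ z = z := by
      rw [hzu, Matrix.mulVec_sub, mulVec_mulVec, mulVec_mulVec, hPP, h1]
    have hzq : z ⬝ᵥ q = 0 := by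
      rw [← hPz, hsym, hPq, dotProduct_zero]
    have huu : u ⬝ᵥ u = 1 / E := by
      have h' : Real.sqrt E * Real.sqrt (u ⬝ᵥ u) * (Real.sqrt E * Real.sqrt (u ⬝ᵥ u)) = 1 := by
        rw [hcon]; norm_num
      have : E * (u ⬝ᵥ u) = 1 := by
        rw [← h', mul_mul_mul_comm, Real.mul_self_sqrt hE.le,
          Real.mul_self_sqrt (dps_nonneg u)]
      field_simp
      linarith [this]
    have hzz : z ⬝ᵥ z = 1 / E - Q := by
      have expand : u ⬝ᵥ u = z ⬝ᵥ z - 2 * (z ⬝ᵥ q) + Q := by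
        have : u = z - q := by rw [hzdef]; abel
        rw [this]
        simp only [sub_dotProduct, dotProduct_sub, hQdef]
        rw [dotProduct_comm q z]
        ring
      rw [expand, hzq] at huu
      linarith
    have hval : e ⬝ᵥ u = p ⬝ᵥ z - e ⬝ᵥ q := by
      have : e ⬝ᵥ z = p ⬝ᵥ z := by
        conv_lhs => rw [← hPz, ← hsym, ← hpdef]
      rw [show u = z - q by rw [hzdef]; abel, dotProduct_sub, this]
    have hCS : p ⬝ᵥ z ≤ Real.sqrt (p ⬝ᵥ p) * Real.sqrt (z ⬝ᵥ z) := cs_dot p z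
    rw [hv, hval, htarget, hzz] at *
    linarith [hCS]
end

section
/- Let d ∈ R^r with d ≥ 0, and τ, c ≥ 0. Strong Lagrange duality holds: max over w ∈ R^r₊ of d^T w subject to ‖w‖ ≤ τ and 1^T w ≤ c equals min over ρ ≥ 0 of τ‖(d − ρ1)₊‖ + cρ. -/
open Matrix

/-!
Weak duality is Cauchy–Schwarz: `d ⬝ᵥ w = (d - ρ 1) ⬝ᵥ w + ρ 1ᵀw ≤ ‖(d - ρ 1)₊‖ ‖w‖ + ρ c`.
Equality holds for the water-filling vector `w = τ u / ‖u‖`, `u = (d - ρ 1)₊`, as soon as it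
meets the budget `1ᵀw ≤ c`, with equality there when `ρ > 0`. Just below the maximum `M` of `d`,
`u` is `M - ρ` times the indicator of the `k` maximisers, so the budget is met iff `τ √k ≤ c`, and
the intermediate value theorem then produces `ρ`. If instead `c ≤ τ √k`, spreading `c` evenly over
the maximisers attains the dual value at `ρ = M`.
-/

open Finset Filter Topology

theorem exists_mem_Icc_nonpos_and_eq_left_or_eq_zero {g : ℝ → ℝ} {a b : ℝ} (hab : a ≤ b)
    (hg : ContinuousOn g (Set.Icc a b)) (hb : g b ≤ 0) :
    ∃ x ∈ Set.Icc a b, g x ≤ 0 ∧ (x = a ∨ g x = 0) := by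
  by_cases ha : g a ≤ 0
  · exact ⟨a, Set.left_mem_Icc.2 hab, ha, Or.inl rfl⟩
  · obtain ⟨x, hx, hgx⟩ := intermediate_value_Icc' hab hg ⟨hb, (not_le.1 ha).le⟩
    exact ⟨x, hx, hgx.le, Or.inr hgx⟩

theorem exists_forall_lt_imp_le_of_pos {ι : Type*} [Finite ι] (d : ι → ℝ) {M : ℝ} (hM : 0 < M) :
    ∃ ρ, 0 ≤ ρ ∧ ρ < M ∧ ∀ i, d i < M → d i ≤ ρ := by
  have hnear : ∀ᶠ ρ in 𝓝[<] M, 0 ≤ ρ ∧ ∀ i, d i < M → d i ≤ ρ := by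
    refine eventually_nhdsWithin_of_eventually_nhds ((eventually_gt_nhds hM).mono fun _ h => h.le)
      |>.and (eventually_all.2 fun i => ?_)
    by_cases hi : d i < M
    · exact eventually_nhdsWithin_of_eventually_nhds
        ((eventually_gt_nhds hi).mono fun _ h _ => h.le)
    · exact Eventually.of_forall fun _ h => absurd h hi
  obtain ⟨ρ, ⟨hρ, hgap⟩, hρM⟩ := (hnear.and self_mem_nhdsWithin).exists
  exact ⟨ρ, hρ, hρM, hgap⟩

theorem mul_max_sub_zero (x ρ : ℝ) :
    x * max (x - ρ) 0 = max (x - ρ) 0 ^ 2 + ρ * max (x - ρ) 0 := by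
  rcases le_total x ρ with h | h
  · rw [max_eq_right (by linarith)]; ring
  · rw [max_eq_left (by linarith)]; ring

namespace WaterFilling

variable {ι : Type*} [Fintype ι]

def IsFeasible (τ c : ℝ) (w : ι → ℝ) : Prop :=
  (∀ i, 0 ≤ w i) ∧ √(∑ i, w i ^ 2) ≤ τ ∧ ∑ i, w i ≤ c

noncomputable def dualObjective (d : ι → ℝ) (τ c ρ : ℝ) : ℝ :=
  τ * √(∑ i, max (d i - ρ) 0 ^ 2) + c * ρ

/-- `‖u‖ (1ᵀw - c)` for `u = (d - ρ 1)₊` and the water-filling vector `w = τ u / ‖u‖`; the factor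
`‖u‖` keeps it continuous where `u` vanishes. -/
noncomputable def budgetGap (d : ι → ℝ) (τ c ρ : ℝ) : ℝ :=
  τ * ∑ i, max (d i - ρ) 0 - c * √(∑ i, max (d i - ρ) 0 ^ 2)

variable {d : ι → ℝ} {τ c : ℝ}

theorem dotProduct_le_dualObjective {w : ι → ℝ} (hw : IsFeasible τ c w) {ρ : ℝ} (hρ : 0 ≤ ρ) :
    d ⬝ᵥ w ≤ dualObjective d τ c ρ := by
  obtain ⟨hw0, hwτ, hwc⟩ := hw
  set u : ι → ℝ := fun i => max (d i - ρ) 0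
  have hsplit : d ⬝ᵥ w = ∑ i, (d i - ρ) * w i + ρ * ∑ i, w i := by
    simp only [dotProduct, mul_sum, ← sum_add_distrib]
    exact sum_congr rfl fun i _ => by ring
  have hpos : ∑ i, (d i - ρ) * w i ≤ ∑ i, u i * w i :=
    sum_le_sum fun i _ => mul_le_mul_of_nonneg_right (le_max_left _ _) (hw0 i)
  calc d ⬝ᵥ w = ∑ i, (d i - ρ) * w i + ρ * ∑ i, w i := hsplit
    _ ≤ √(∑ i, u i ^ 2) * √(∑ i, w i ^ 2) + ρ * c := by
        gcongr
        exact hpos.trans (Real.sum_mul_le_sqrt_mul_sqrt _ _ _)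
    _ ≤ √(∑ i, u i ^ 2) * τ + ρ * c := by gcongr
    _ = dualObjective d τ c ρ := by rw [dualObjective]; ring

theorem continuous_budgetGap : Continuous (budgetGap d τ c) := by
  unfold budgetGap
  fun_prop

theorem sqrt_sum_max_sub_sq_pos {ρ : ℝ} {j : ι} (hj : ρ < d j) :
    0 < √(∑ i, max (d i - ρ) 0 ^ 2) :=
  Real.sqrt_pos.2 <| sum_pos' (fun _ _ => sq_nonneg _)
    ⟨j, mem_univ j, pow_pos (lt_max_of_lt_left (sub_pos.2 hj)) 2⟩

theorem exists_isFeasible_of_budgetGap {ρ : ℝ} (hτ : 0 ≤ τ)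
    (hu : 0 < √(∑ i, max (d i - ρ) 0 ^ 2)) (hgap : budgetGap d τ c ρ ≤ 0)
    (hslack : ρ = 0 ∨ budgetGap d τ c ρ = 0) :
    ∃ w, IsFeasible τ c w ∧ d ⬝ᵥ w = dualObjective d τ c ρ := by
  set u : ι → ℝ := fun i => max (d i - ρ) 0
  set N := √(∑ i, u i ^ 2)
  have hN : N ^ 2 = ∑ i, u i ^ 2 := Real.sq_sqrt (sum_nonneg fun _ _ => sq_nonneg _)
  have hslack' : ρ * (τ * ∑ i, u i) = ρ * (c * N) := by
    rcases hslack with h | h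
    · simp [h]
    · rw [sub_eq_zero.1 h]
  refine ⟨fun i => τ / N * u i, ⟨fun _ => by positivity, ?_, ?_⟩, ?_⟩
  · have : ∑ i, (τ / N * u i) ^ 2 = τ ^ 2 := by
      simp_rw [mul_pow, ← mul_sum, ← hN]; field_simp
    rw [this, Real.sqrt_sq hτ]
  · rw [← mul_sum, div_mul_eq_mul_div, div_le_iff₀ hu]
    exact sub_nonpos.1 hgap
  · have : ∑ i, d i * u i = N ^ 2 + ρ * ∑ i, u i := by
      rw [hN, mul_sum, ← sum_add_distrib]
      exact sum_congr rfl fun i _ => mul_max_sub_zero _ _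
    simp only [dotProduct, mul_left_comm (d _), ← mul_sum, this, dualObjective]
    field_simp
    linear_combination hslack'

theorem sum_ite_eq_card_mul (M x : ℝ) :
    ∑ i, (if d i = M then x else 0) = #{i | d i = M} * x := by
  rw [← sum_filter, sum_const, nsmul_eq_mul]

theorem exists_isFeasible_of_le_sqrt_card {M : ℝ} (hM : ∀ i, d i ≤ M) (hc : 0 ≤ c)
    (hA : ∃ i, d i = M) (hcτ : c ≤ τ * √(#{i | d i = M} : ℝ)) :
    ∃ w, IsFeasible τ c w ∧ d ⬝ᵥ w = dualObjective d τ c M := by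
  set k : ℝ := ↑(#{i | d i = M}) with hk_def
  obtain ⟨j, hj⟩ := hA
  have hk : 0 < k := by
    simp only [k, Nat.cast_pos, card_pos]
    exact ⟨j, by simpa using hj⟩
  refine ⟨fun i => if d i = M then c / k else 0, ⟨fun i => by positivity, ?_, ?_⟩, ?_⟩
  · have : ∑ i, (if d i = M then c / k else 0) ^ 2 = c ^ 2 / k := by
      simp_rw [ite_pow, zero_pow two_ne_zero, sum_ite_eq_card_mul, ← hk_def]
      field_simp
    rw [this, Real.sqrt_div' _ hk.le, Real.sqrt_sq hc, div_le_iff₀ (Real.sqrt_pos.2 hk)]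
    exact hcτ
  · rw [sum_ite_eq_card_mul, ← hk_def, mul_div_cancel₀ c hk.ne']
  · have hdw : ∀ i, d i * (if d i = M then c / k else 0) = if d i = M then M * (c / k) else 0 :=
      fun i => by split_ifs with h <;> simp [h]
    have hu : ∀ i, max (d i - M) 0 = 0 := fun i => max_eq_right (sub_nonpos.2 (hM i))
    simp only [dotProduct, hdw, sum_ite_eq_card_mul, ← hk_def, dualObjective, hu,
      zero_pow two_ne_zero, sum_const_zero, Real.sqrt_zero, mul_zero, zero_add]
    field_simp

theorem budgetGap_nonpos_of_forall_lt_imp_le {M ρ : ℝ} (hM : ∀ i, d i ≤ M) (hρM : ρ ≤ M)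
    (hρ : ∀ i, d i < M → d i ≤ ρ) (hτc : τ * √(#{i | d i = M} : ℝ) ≤ c) :
    budgetGap d τ c ρ ≤ 0 := by
  set k : ℝ := ↑(#{i | d i = M}) with hk_def
  have hu : ∀ i, max (d i - ρ) 0 = if d i = M then M - ρ else 0 := by
    intro i
    split_ifs with h
    · rw [h, max_eq_left (sub_nonneg.2 hρM)]
    · exact max_eq_right (sub_nonpos.2 (hρ i (lt_of_le_of_ne (hM i) h)))
  have hk0 : 0 ≤ k := Nat.cast_nonneg _
  have hk : √k * √k = k := Real.mul_self_sqrt hk0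
  have hgap : budgetGap d τ c ρ = √k * (M - ρ) * (τ * √k - c) := by
    simp_rw [budgetGap, hu, ite_pow, zero_pow two_ne_zero, sum_ite_eq_card_mul, ← hk_def,
      Real.sqrt_mul hk0, Real.sqrt_sq (sub_nonneg.2 hρM)]
    linear_combination -τ * (M - ρ) * hk
  rw [hgap]
  exact mul_nonpos_of_nonneg_of_nonpos (by positivity) (by linarith [sub_nonneg.2 hρM])

theorem exists_isFeasible_dotProduct_eq_dualObjective (hτ : 0 ≤ τ) (hc : 0 ≤ c) :
    ∃ w ρ, IsFeasible τ c w ∧ 0 ≤ ρ ∧ d ⬝ᵥ w = dualObjective d τ c ρ := by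
  by_cases hd : ∀ i, d i ≤ 0
  · refine ⟨0, 0, ⟨fun _ => le_rfl, by simpa using hτ, by simpa using hc⟩, le_rfl, ?_⟩
    simp [dualObjective, max_eq_right (hd _)]
  push Not at hd
  obtain ⟨j, hj⟩ := hd
  have : Nonempty ι := ⟨j⟩
  obtain ⟨m, hm⟩ := Finite.exists_max d
  obtain ⟨ρ₀, hρ₀, hρ₀m, hρ₀gap⟩ := exists_forall_lt_imp_le_of_pos d (hj.trans_le (hm j))
  rcases le_total c (τ * √(#{i | d i = d m} : ℝ)) with hcτ | hτc
  · obtain ⟨w, hw, hdw⟩ := exists_isFeasible_of_le_sqrt_card hm hc ⟨m, rfl⟩ hcτ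
    exact ⟨w, d m, hw, hρ₀.trans hρ₀m.le, hdw⟩
  · obtain ⟨ρ, hρ, hgap, hslack⟩ := exists_mem_Icc_nonpos_and_eq_left_or_eq_zero hρ₀
      continuous_budgetGap.continuousOn
      (budgetGap_nonpos_of_forall_lt_imp_le hm hρ₀m.le hρ₀gap hτc)
    obtain ⟨w, hw, hdw⟩ := exists_isFeasible_of_budgetGap hτ
      (sqrt_sum_max_sub_sq_pos (hρ.2.trans_lt hρ₀m)) hgap hslack
    exact ⟨w, ρ, hw, hρ.1, hdw⟩

end WaterFilling

theorem stmt_16_general (r : ℕ) (d : Fin r → ℝ) (τ c : ℝ)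
    (hτ : 0 ≤ τ) (hc : 0 ≤ c) :
    ∃ m : ℝ,
      IsGreatest {x : ℝ | ∃ w : Fin r → ℝ, (∀ i, 0 ≤ w i) ∧
          Real.sqrt (∑ i, (w i) ^ 2) ≤ τ ∧ (∑ i, w i) ≤ c ∧ x = d ⬝ᵥ w} m ∧
      IsLeast {x : ℝ | ∃ ρ : ℝ, 0 ≤ ρ ∧
          x = τ * Real.sqrt (∑ i, (max (d i - ρ) 0) ^ 2) + c * ρ} m := by
  obtain ⟨w, ρ, hw, hρ, hdw⟩ := WaterFilling.exists_isFeasible_dotProduct_eq_dualObjective (d := d) hτ hc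
  refine ⟨d ⬝ᵥ w, ⟨⟨w, hw.1, hw.2.1, hw.2.2, rfl⟩, ?_⟩, ⟨⟨ρ, hρ, hdw⟩, ?_⟩⟩
  · rintro _ ⟨w', hw'₀, hw'τ, hw'c, rfl⟩
    exact hdw ▸ WaterFilling.dotProduct_le_dualObjective ⟨hw'₀, hw'τ, hw'c⟩ hρ
  · rintro _ ⟨ρ', hρ', rfl⟩
    exact WaterFilling.dotProduct_le_dualObjective hw hρ'

theorem stmt_16 (r : ℕ) (d : Fin r → ℝ) (hd : ∀ i, 0 ≤ d i) (τ c : ℝ)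
    (hτ : 0 ≤ τ) (hc : 0 ≤ c) :
    ∃ m : ℝ,
      IsGreatest {x : ℝ | ∃ w : Fin r → ℝ, (∀ i, 0 ≤ w i) ∧
          Real.sqrt (∑ i, (w i) ^ 2) ≤ τ ∧ (∑ i, w i) ≤ c ∧ x = d ⬝ᵥ w} m ∧
      IsLeast {x : ℝ | ∃ ρ : ℝ, 0 ≤ ρ ∧
          x = τ * Real.sqrt (∑ i, (max (d i - ρ) 0) ^ 2) + c * ρ} m :=
  stmt_16_general r d τ c hτ hc
end
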